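/- arXiv:math/0509313 — 2 statements merged into one kernel-verified Lean document; each statement's English description precedes it below -/
import Mathlib

section
/- Let S be a semigroupoid which has an automatic cross-section, and let T be a finite subset of the arrows of S. Then S has an automatic cross-section (Y, L, sigma) such that the restriction of sigma to the edges of Y is injective and has image containing T. -/
/- Common framework: graphs, path languages, synchronous regularity,
   semigroupoids, automatic structures, and Rees matrix constructions. -/

namespace AutoRees

/-- Raw data of a semigroupoid: source and target maps on arrows together with a
totalised multiplication (whose values are only meaningful on composable pairs). -/
structure PreSgpd (O A : Type) where
  src : A → O
  tgt : A → O
  mul : A → A → A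

/-- A semigroupoid: the multiplication respects sources and targets and is
associative, on composable pairs. -/
structure Sgpd (O A : Type) extends PreSgpd O A where
  src_mul : ∀ e f, tgt e = src f → src (mul e f) = src e
  tgt_mul : ∀ e f, tgt e = src f → tgt (mul e f) = tgt f
  mul_assoc' : ∀ e f g, tgt e = src f → tgt f = src g →
    mul (mul e f) g = mul e (mul f g)

/-- Evaluate a nonempty word of edge labels as a product in the semigroupoid
(`none` on the empty word). -/
def evalPath? {O A E : Type} (S : PreSgpd O A) (lab : E → A) : List E → Option A
  | [] => none
  | e :: l => some ((l.map lab).foldl S.mul (lab e))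

/-- The consecutive-compatibility condition making a list of edges a path. -/
def IsPathChain {V E : Type} (esrc etgt : E → V) (l : List E) : Prop :=
  List.Chain' (fun e f => etgt e = esrc f) l

/-- The target of a non-empty path. -/
def pathTgt? {V E : Type} (etgt : E → V) (l : List E) : Option V :=
  l.getLast?.map etgt

/-- The source of a non-empty path. -/
def pathSrc? {V E : Type} (esrc : E → V) (l : List E) : Option V :=
  l.head?.map esrc

/-- A set of words is regular if it is a regular language in the usual sense. -/
def IsRegularSet {α : Type} (L : Set (List α)) : Prop :=
  Language.IsRegular (show Language α from L)

/-- The padding symbol used to pad a pair of paths, at the target of `l`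
(the letters of the padded alphabet `X^$` are `Sum.inl` (a genuine edge) or
`Sum.inr (some v)` (the padding edge at vertex `v`)). -/
def padSym {V E : Type} (etgt : E → V) (l : List E) : E ⊕ Option V :=
  Sum.inr (l.getLast?.map etgt)

/-- The padded convolution `(a, b) δ_X` of a pair of paths. -/
def deltaPair {V E : Type} (etgt : E → V) (a b : List E) :
    List ((E ⊕ Option V) × (E ⊕ Option V)) :=
  (a.map Sum.inl).zip (b.map Sum.inl) ++
    (if a.length ≤ b.length
      then (b.drop a.length).map (fun e => (padSym etgt a, Sum.inl e))
      else (a.drop b.length).map (fun e => (Sum.inl e, padSym etgt b)))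

/-- A binary relation on paths is synchronously regular if its image under the
padding map is a regular language over the padded product alphabet. -/
def SyncRegular {V E : Type} (etgt : E → V) (R : Set (List E × List E)) : Prop :=
  IsRegularSet { w | ∃ p ∈ R, w = deltaPair etgt p.1 p.2 }

/-- A choice of representatives `(X, K, ρ)` for a semigroupoid `S`: a graph `X`
with vertex set `S^0` (edge set `E`, source `esrc`, target `etgt`), a semigroupoid
morphism `ρ : X^+ → S` (induced by the edge-labelling `lab`), and a language `K`
of non-empty paths with `K ρ = S^1`. -/
structure ChoiceOfReps {O A : Type} (S : PreSgpd O A) (E : Type) where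
  esrc : E → O
  etgt : E → O
  lab : E → A
  lab_src : ∀ e, S.src (lab e) = esrc e
  lab_tgt : ∀ e, S.tgt (lab e) = etgt e
  K : Set (List E)
  K_path : ∀ l ∈ K, l ≠ [] ∧ IsPathChain esrc etgt l
  K_onto : ∀ a : A, ∃ l ∈ K, evalPath? S lab l = some a

variable {O A E : Type} {S : PreSgpd O A}

/-- The relation `K_=` = {(u,v) ∈ K × K : u ρ = v ρ}. -/
def relEq (C : ChoiceOfReps S E) : Set (List E × List E) :=
  { p | p.1 ∈ C.K ∧ p.2 ∈ C.K ∧ evalPath? S C.lab p.1 = evalPath? S C.lab p.2 }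

/-- The relation `K_a` for an edge `a` of `X`. -/
def relEdge (C : ChoiceOfReps S E) (a : E) : Set (List E × List E) :=
  { p | p.1 ∈ C.K ∧ p.2 ∈ C.K ∧ pathTgt? C.etgt p.1 = some (C.esrc a) ∧
        evalPath? S C.lab (p.1 ++ [a]) = evalPath? S C.lab p.2 }

/-- The relation `K_a` for a vertex `a` of `X` (regarded as the empty path at `a`). -/
def relVertex (C : ChoiceOfReps S E) (v : O) : Set (List E × List E) :=
  { p | p.1 ∈ C.K ∧ p.2 ∈ C.K ∧ pathTgt? C.etgt p.1 = some v ∧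
        evalPath? S C.lab p.1 = evalPath? S C.lab p.2 }

/-- An automatic structure: a finitely generated choice of representatives with
`K` regular such that `K_a` is synchronously regular for every edge and vertex. -/
def IsAutomaticStructure (C : ChoiceOfReps S E) : Prop :=
  Finite E ∧ IsRegularSet C.K ∧
    (∀ a : E, SyncRegular C.etgt (relEdge C a)) ∧
    (∀ v : O, SyncRegular C.etgt (relVertex C v))

/-- The set of non-empty prefixes of words in `K`. -/
def prefs {E : Type} (K : Set (List E)) : Set (List E) :=
  { p | p ≠ [] ∧ ∃ l ∈ K, p <+: l }

/-- The relation `K'_=` = {(u,v) ∈ K × Pref(K) : u ρ = v ρ}. -/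
def relPrefEq (C : ChoiceOfReps S E) : Set (List E × List E) :=
  { p | p.1 ∈ C.K ∧ p.2 ∈ prefs C.K ∧ evalPath? S C.lab p.1 = evalPath? S C.lab p.2 }

/-- A prefix-automatic structure. -/
def IsPrefixAutomaticStructure (C : ChoiceOfReps S E) : Prop :=
  IsAutomaticStructure C ∧ SyncRegular C.etgt (relPrefEq C)

/-- A cross-section: `ρ` restricted to `K` is injective. -/
def IsCrossSection (C : ChoiceOfReps S E) : Prop :=
  ∀ u ∈ C.K, ∀ v ∈ C.K, evalPath? S C.lab u = evalPath? S C.lab v → u = v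

/-- `K` is closed under taking non-empty prefixes. -/
def IsPrefixClosed (C : ChoiceOfReps S E) : Prop :=
  ∀ l ∈ C.K, ∀ p : List E, p ≠ [] → p <+: l → p ∈ C.K

/-- A semigroupoid (or semigroup, in the one-object case) is automatic if it
admits an automatic structure. -/
def IsAutomatic (S : PreSgpd O A) : Prop :=
  ∃ (E : Type) (C : ChoiceOfReps S E), IsAutomaticStructure C

/-- Prefix-automaticity. -/
def IsPrefixAutomatic (S : PreSgpd O A) : Prop :=
  ∃ (E : Type) (C : ChoiceOfReps S E), IsPrefixAutomaticStructure C

/-- Finite generation: every arrow is a (composable) product of arrows from some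
fixed finite set. -/
def IsFG (S : PreSgpd O A) : Prop :=
  ∃ T : Set A, T.Finite ∧ ∀ a : A, ∃ l : List A, l ≠ [] ∧ (∀ x ∈ l, x ∈ T) ∧
    IsPathChain S.src S.tgt l ∧ evalPath? S id l = some a

/-- An arrow is an identity if it acts as an identity on all composable products. -/
def IsIdentity (S : PreSgpd O A) (e : A) : Prop :=
  (∀ x, S.tgt e = S.src x → S.mul e x = x) ∧ (∀ y, S.tgt y = S.src e → S.mul y e = y)

/-- A small category is a semigroupoid with an identity arrow at every object. -/
def IsSmallCategory (S : PreSgpd O A) : Prop :=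
  ∀ v : O, ∃ e : A, S.src e = v ∧ S.tgt e = v ∧ IsIdentity S e

/-- No object is isolated. -/
def IsolationFree (S : PreSgpd O A) : Prop :=
  ∀ v : O, ∃ a : A, S.src a = v ∨ S.tgt a = v

namespace Rees

variable {O A I Λ : Type}

/-- A triple `(i, x, λ)` is valid if `i F = x α` and `x ω = λ G`. -/
def Valid (S : Sgpd O A) (F : I → O) (G : Λ → O) (t : I × A × Λ) : Prop :=
  F t.1 = S.src t.2.1 ∧ S.tgt t.2.1 = G t.2.2

/-- The set of valid Rees triples. -/
def Triples (S : Sgpd O A) (F : I → O) (G : Λ → O) : Type :=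
  { t : I × A × Λ // Valid S F G t }

theorem prod_valid (S : Sgpd O A) {F : I → O} {G : Λ → O}
    {i : I} {x : A} {lam : Λ} {j : I} {y : A} {mu : Λ} {p : A}
    (hx : Valid S F G (i, x, lam)) (hy : Valid S F G (j, y, mu))
    (hps : S.src p = G lam) (hpt : S.tgt p = F j) :
    Valid S F G (i, S.mul (S.mul x p) y, mu) := by
  obtain ⟨hx1, hx2⟩ := hx
  obtain ⟨hy1, hy2⟩ := hy
  have h1 : S.tgt x = S.src p := by rw [hps]; exact hx2
  have h2 : S.tgt p = S.src y := by rw [hpt]; exact hy1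
  have h3 : S.tgt (S.mul x p) = S.src y := by rw [S.tgt_mul x p h1]; exact h2
  constructor
  · show F i = S.src (S.mul (S.mul x p) y)
    rw [S.src_mul _ y h3, S.src_mul x p h1]; exact hx1
  · show S.tgt (S.mul (S.mul x p) y) = G mu
    rw [S.tgt_mul _ y h3]; exact hy2

/-- Data for a Rees matrix construction with zero over a semigroupoid `S`:
indexing functions `F`, `G` surjective onto the sets of sources and of targets
respectively, and a sandwich matrix `P` with entries in `S^1 ∪ {0}`
(`none` representing `0`) compatible with `F` and `G`. -/
structure Data0 (S : Sgpd O A) (I Λ : Type) where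
  F : I → O
  G : Λ → O
  P : Λ → I → Option A
  F_into : ∀ i, ∃ a : A, S.src a = F i
  F_onto : ∀ a : A, ∃ i, F i = S.src a
  G_into : ∀ lam, ∃ a : A, S.tgt a = G lam
  G_onto : ∀ a : A, ∃ lam, G lam = S.tgt a
  P_src : ∀ lam i p, P lam i = some p → S.src p = G lam
  P_tgt : ∀ lam i p, P lam i = some p → S.tgt p = F i

/-- Underlying set of the Rees matrix semigroup with zero (`none` is the zero). -/
def Carrier0 (S : Sgpd O A) (R : Data0 S I Λ) : Type :=
  Option (Triples S R.F R.G)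

/-- Multiplication of the Rees matrix semigroup with zero. -/
def mul0 (S : Sgpd O A) (R : Data0 S I Λ) :
    Carrier0 S R → Carrier0 S R → Carrier0 S R
  | some ⟨(i, x, lam), hx⟩, some ⟨(j, y, mu), hy⟩ =>
    match hp : R.P lam j with
    | some p => some ⟨(i, S.mul (S.mul x p) y, mu),
        prod_valid S hx hy (R.P_src lam j p hp) (R.P_tgt lam j p hp)⟩
    | none => none
  | none, _ => none
  | _, none => none

/-- The Rees matrix semigroup with zero `M^0(S; F(I), G(Λ); P)`, as a
one-object semigroupoid (i.e. a semigroup). -/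
def pre0 (S : Sgpd O A) (R : Data0 S I Λ) : PreSgpd Unit (Carrier0 S R) where
  src _ := ()
  tgt _ := ()
  mul := mul0 S R

/-- Data for a Rees matrix construction without zero (no zero entries in `P`). -/
structure Data (S : Sgpd O A) (I Λ : Type) where
  F : I → O
  G : Λ → O
  P : Λ → I → A
  F_into : ∀ i, ∃ a : A, S.src a = F i
  F_onto : ∀ a : A, ∃ i, F i = S.src a
  G_into : ∀ lam, ∃ a : A, S.tgt a = G lam
  G_onto : ∀ a : A, ∃ lam, G lam = S.tgt a
  P_src : ∀ lam i, S.src (P lam i) = G lam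
  P_tgt : ∀ lam i, S.tgt (P lam i) = F i

/-- Underlying set of the Rees matrix semigroup without zero. -/
def Carrier (S : Sgpd O A) (R : Data S I Λ) : Type :=
  Triples S R.F R.G

/-- Multiplication of the Rees matrix semigroup without zero. -/
def mul (S : Sgpd O A) (R : Data S I Λ) :
    Carrier S R → Carrier S R → Carrier S R
  | ⟨(i, x, lam), hx⟩, ⟨(j, y, mu), hy⟩ =>
    ⟨(i, S.mul (S.mul x (R.P lam j)) y, mu),
      prod_valid S hx hy (R.P_src lam j) (R.P_tgt lam j)⟩

/-- The Rees matrix semigroup without zero `M(S; F(I), G(Λ); P)`, as a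
one-object semigroupoid (i.e. a semigroup). -/
def pre (S : Sgpd O A) (R : Data S I Λ) : PreSgpd Unit (Carrier S R) where
  src _ := ()
  tgt _ := ()
  mul := mul S R

/-- The set `S P' S` of arrows of the form `s p t` with `p` a non-zero entry of `P`. -/
def SPS0 (S : Sgpd O A) (R : Data0 S I Λ) : Set A :=
  { a | ∃ s p t lam i, R.P lam i = some p ∧ S.tgt s = S.src p ∧ S.tgt p = S.src t ∧
        a = S.mul (S.mul s p) t }

/-- The set `S P S` for a matrix without zero entries. -/
def SPS (S : Sgpd O A) (R : Data S I Λ) : Set A :=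
  { a | ∃ s t lam i, S.tgt s = S.src (R.P lam i) ∧ S.tgt (R.P lam i) = S.src t ∧
        a = S.mul (S.mul s (R.P lam i)) t }

/-- The set of targets of arrows of `S` (the codomain of `G`). -/
def tgtSet (S : Sgpd O A) : Set O := { v | ∃ a : A, S.tgt a = v }

/-- `T` is strongly right-ideal-generated by a row cross-section of `P`. -/
def StronglyRIG0 (S : Sgpd O A) (R : Data0 S I Λ) (T : Set A) : Prop :=
  ∃ Λ' : Set Λ, Set.BijOn R.G Λ' (tgtSet S) ∧
    ∀ t ∈ T, ∃ lam ∈ Λ', ∃ i p s, R.P lam i = some p ∧ S.tgt p = S.src s ∧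
      t = S.mul p s

/-- `T` is weakly right-ideal-generated by a row cross-section of `P`. -/
def WeaklyRIG0 (S : Sgpd O A) (R : Data0 S I Λ) (T : Set A) : Prop :=
  ∃ Λ' : Set Λ, Set.BijOn R.G Λ' (tgtSet S) ∧
    ∀ t ∈ T, ∃ lam ∈ Λ', ∃ i p, R.P lam i = some p ∧
      (t = p ∨ ∃ s, S.tgt p = S.src s ∧ t = S.mul p s)

/-- Weak right-ideal generation, for a matrix without zero entries. -/
def WeaklyRIG (S : Sgpd O A) (R : Data S I Λ) (T : Set A) : Prop :=
  ∃ Λ' : Set Λ, Set.BijOn R.G Λ' (tgtSet S) ∧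
    ∀ t ∈ T, ∃ lam ∈ Λ', ∃ i,
      (t = R.P lam i ∨ ∃ s, S.tgt (R.P lam i) = S.src s ∧ t = S.mul (R.P lam i) s)

end Rees


section ListLemmas

variable {V E X Y Z : Type}

/-- pad a list to length `n` over the padded alphabet. -/
def padded (etgt : E → V) (a : List E) (n : ℕ) : List (E ⊕ Option V) :=
  a.map Sum.inl ++ List.replicate (n - a.length) (padSym etgt a)

/-- the last genuine letter of a padded column. -/
def lastInl {V E : Type} (s : List (E ⊕ Option V)) : Option E :=
  (s.filterMap Sum.getLeft?).getLast?

/-- update the last-genuine-letter tracker. -/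
def upd {V E : Type} (l : Option E) (x : E ⊕ Option V) : Option E :=
  match x with
  | .inl e => some e
  | .inr _ => l

theorem zip_take_right (l : List X) : ∀ (l' : List Y), l.zip (l'.take l.length) = l.zip l' := by
  induction l with
  | nil => intro l'; simp
  | cons x xs ih =>
    intro l'
    cases l' with
    | nil => simp
    | cons y ys => simp [ih ys]

theorem take_zip_left (l' : List Y) : ∀ (l : List X), (l.take l'.length).zip l' = l.zip l' := by
  induction l' with
  | nil => intro l; simp
  | cons y ys ih =>
    intro l
    cases l with
    | nil => simp
    | cons x xs => simp [ih xs]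

theorem zip_replicate_left (f : X → Z) (c : Y) :
    ∀ (d : List X), (List.replicate d.length c).zip (d.map f) = d.map (fun e => (c, f e)) := by
  intro d
  induction d with
  | nil => simp
  | cons x xs ih => simp [List.replicate_succ, ih]

theorem zip_replicate_right (f : X → Z) (c : Y) :
    ∀ (d : List X), (d.map f).zip (List.replicate d.length c) = d.map (fun e => (f e, c)) := by
  intro d
  induction d with
  | nil => simp
  | cons x xs ih => simp [List.replicate_succ, ih]

theorem padded_length (etgt : E → V) (a : List E) (n : ℕ) :
    (padded etgt a n).length = max n a.length := by
  simp [padded]; omega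

theorem padded_length_of_le (etgt : E → V) {a : List E} {n : ℕ} (h : a.length ≤ n) :
    (padded etgt a n).length = n := by
  rw [padded_length]; omega

theorem delta_eq (etgt : E → V) (a b : List E) :
    deltaPair etgt a b =
      (padded etgt a (max a.length b.length)).zip (padded etgt b (max a.length b.length)) := by
  rcases le_or_gt a.length b.length with h | h
  · have hmax : max a.length b.length = b.length := by omega
    rw [deltaPair, if_pos h, hmax]
    have hb : padded etgt b b.length = b.map Sum.inl := by
      simp [padded]
    rw [hb]
    have hsplit : b.map (Sum.inl : E → E ⊕ Option V)
        = (b.take a.length).map Sum.inl ++ (b.drop a.length).map Sum.inl := by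
      rw [← List.map_append, List.take_append_drop]
    conv_rhs => rw [hsplit]
    rw [padded, List.zip_append (by simp; omega)]
    congr 1
    · rw [← zip_take_right (a.map Sum.inl) (b.map Sum.inl)]
      congr 1
      rw [List.map_take]
      congr 1
      simp
    · have hlen : (b.drop a.length).length = b.length - a.length := by simp
      rw [← hlen, zip_replicate_left]
  · have hmax : max a.length b.length = a.length := by omega
    rw [deltaPair, if_neg (by omega), hmax]
    have ha : padded etgt a a.length = a.map (Sum.inl : E → E ⊕ Option V) := by simp [padded]
    have hsplit : a.map (Sum.inl : E → E ⊕ Option V)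
        = (a.take b.length).map Sum.inl ++ (a.drop b.length).map Sum.inl := by
      rw [← List.map_append, List.take_append_drop]
    rw [ha, padded]
    conv_rhs => rw [hsplit]
    rw [List.zip_append (by simp; omega)]
    congr 1
    · rw [← take_zip_left (b.map (Sum.inl : E → E ⊕ Option V)) (a.map Sum.inl)]
      congr 1
      rw [List.map_take]
      congr 1
      simp
    · rw [show a.length - b.length = (a.drop b.length).length by simp, zip_replicate_right]

theorem delta_length (etgt : E → V) (a b : List E) :
    (deltaPair etgt a b).length = max a.length b.length := by
  rw [delta_eq, List.length_zip, padded_length, padded_length]; omega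

theorem map_fst_delta (etgt : E → V) (a b : List E) :
    (deltaPair etgt a b).map Prod.fst = padded etgt a (max a.length b.length) := by
  rw [delta_eq]
  apply List.map_fst_zip
  rw [padded_length, padded_length]; omega

theorem map_snd_delta (etgt : E → V) (a b : List E) :
    (deltaPair etgt a b).map Prod.snd = padded etgt b (max a.length b.length) := by
  rw [delta_eq]
  apply List.map_snd_zip
  rw [padded_length, padded_length]; omega

theorem decode_padded (etgt : E → V) (a : List E) (n : ℕ) :
    (padded etgt a n).filterMap Sum.getLeft? = a := by
  rw [padded, List.filterMap_append, List.filterMap_map]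
  have h1 : List.filterMap (Sum.getLeft? ∘ (Sum.inl : E → E ⊕ Option V)) a = a := by
    simp [Function.comp_def]
  have h2 : List.filterMap Sum.getLeft? (List.replicate (n - a.length) (padSym etgt a))
      = ([] : List E) := by
    rw [List.filterMap_replicate]
    simp [padSym]
  rw [h1, h2, List.append_nil]

theorem lastInl_padded (etgt : E → V) (a : List E) (n : ℕ) :
    lastInl (padded etgt a n) = a.getLast? := by
  rw [lastInl, decode_padded]

theorem padSym_eq (etgt : E → V) (a : List E) :
    padSym etgt a = Sum.inr (a.getLast?.map etgt) := rfl

theorem take_padded (etgt : E → V) {a : List E} {i N : ℕ} (h1 : a.length ≤ i) (h2 : i ≤ N) :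
    (padded etgt a N).take i = padded etgt a i := by
  rw [padded, List.take_append, List.take_replicate,
    List.take_of_length_le (by simpa using h1), padded]
  congr 2
  simp; omega

theorem padded_split (etgt : E → V) {a : List E} {n N : ℕ} (h1 : a.length ≤ n) (h2 : n ≤ N) :
    padded etgt a N = padded etgt a n ++ List.replicate (N - n) (padSym etgt a) := by
  rw [padded, padded, List.append_assoc, ← List.replicate_add]
  congr 2
  omega

theorem lastInl_append_upd (s : List (E ⊕ Option V)) (x : E ⊕ Option V) :
    lastInl (s ++ [x]) = upd (lastInl s) x := by
  rw [lastInl, List.filterMap_append]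
  cases x with
  | inl e => simp [upd, lastInl]
  | inr c => simp [upd, lastInl]

theorem pg_lt (etgt : E → V) {a : List E} {i N : ℕ} (h : i < a.length) :
    (padded etgt a N)[i]? = some (Sum.inl (a[i])) := by
  rw [padded, List.getElem?_append_left (by simpa using h), List.getElem?_map,
    List.getElem?_eq_getElem h]
  rfl

theorem pg_ge (etgt : E → V) {a : List E} {i N : ℕ} (h1 : a.length ≤ i) (h2 : i < N) :
    (padded etgt a N)[i]? = some (padSym etgt a) := by
  rw [padded, List.getElem?_append_right (by simpa using h1)]
  rw [List.getElem?_replicate, if_pos (by simp; omega)]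

theorem zip_snoc {as : List X} {bs : List Y} (h : as.length = bs.length) (x : X) (y : Y) :
    (as ++ [x]).zip (bs ++ [y]) = as.zip bs ++ [(x, y)] := by
  rw [List.zip_append h]; rfl

theorem zip_self_eq (w : List (X × Y)) : (w.map Prod.fst).zip (w.map Prod.snd) = w := by
  induction w with
  | nil => rfl
  | cons p l ih => simp [ih]

end ListLemmas

section B
variable {V E : Type}

abbrev PadL (V E : Type) := E ⊕ Option V
abbrev Lett (V E : Type) := PadL V E × PadL V E

theorem lastInl_append_replicate_inr (s : List (PadL V E)) (j : ℕ) (c : Option V) :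
    lastInl (s ++ List.replicate j (Sum.inr c)) = lastInl s := by
  rw [lastInl, List.filterMap_append, List.filterMap_replicate]
  simp [lastInl]

variable (etgt : E → V) {σ σ1 σ2 : Type}

/-- one-machine step relation in the composition automaton. -/
def mstep (M : DFA (Lett V E) σ) (s : σ ⊕ Unit) (lx lz : Option E) (ℓ : Lett V E) :
    Set (σ ⊕ Unit) :=
  match s with
  | .inl q => {r | r = .inl (M.step q ℓ) ∨
      (r = .inr () ∧ q ∈ M.accept ∧ ℓ.1 = .inr (lx.map etgt) ∧ ℓ.2 = .inr (lz.map etgt))}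
  | .inr _ => {r | r = .inr () ∧ ℓ.1 = .inr (lx.map etgt) ∧ ℓ.2 = .inr (lz.map etgt)}

/-- acceptance continuation condition. -/
def okc (M : DFA (Lett V E) σ) : σ ⊕ Unit → List (Lett V E) → Prop
  | .inl q, l => M.evalFrom q l ∈ M.accept
  | .inr _, l => l = []

abbrev CQ (σ1 σ2 E : Type) := (σ1 ⊕ Unit) × (σ2 ⊕ Unit) × Option E × Option E × Option E

/-- the composition NFA. -/
def compNFA (M1 : DFA (Lett V E) σ1) (M2 : DFA (Lett V E) σ2) :
    NFA (Lett V E) (CQ σ1 σ2 E) where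
  step := fun q ℓ =>
    {q' | ¬(ℓ.1.isRight = true ∧ ℓ.2.isRight = true) ∧ ∃ z : PadL V E,
      q'.2.2.1 = upd q.2.2.1 ℓ.1 ∧ q'.2.2.2.1 = upd q.2.2.2.1 z ∧
      q'.2.2.2.2 = upd q.2.2.2.2 ℓ.2 ∧
      q'.1 ∈ mstep etgt M1 q.1 q.2.2.1 q.2.2.2.1 (ℓ.1, z) ∧
      q'.2.1 ∈ mstep etgt M2 q.2.1 q.2.2.2.1 q.2.2.2.2 (z, ℓ.2)}
  start := {(.inl M1.start, .inl M2.start, none, none, none)}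
  accept := {q | ∃ zs : List E,
    okc M1 q.1 (zs.map fun z => (Sum.inr (q.2.2.1.map etgt), Sum.inl z)) ∧
    okc M2 q.2.1 (zs.map fun z => (Sum.inl z, Sum.inr (q.2.2.2.2.map etgt)))}

/-- single-machine invariant. -/
def Pp (M : DFA (Lett V E) σ) (as bs : List (PadL V E)) : σ ⊕ Unit → Prop
  | .inl q => q = M.evalFrom M.start (as.zip bs)
  | .inr _ => ∃ k, k ≤ as.length ∧ k ≤ bs.length ∧
      ((as.take k).zip (bs.take k)) ∈ M.accepts ∧
      as.drop k = List.replicate (as.length - k) (Sum.inr ((lastInl (as.take k)).map etgt)) ∧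
      bs.drop k = List.replicate (bs.length - k) (Sum.inr ((lastInl (bs.take k)).map etgt))

/-- global invariant of the composition NFA. -/
def Inv (M1 : DFA (Lett V E) σ1) (M2 : DFA (Lett V E) σ2)
    (w : List (Lett V E)) (q : CQ σ1 σ2 E) : Prop :=
  ∃ zs : List (PadL V E), zs.length = w.length ∧
    q.2.2.1 = lastInl (w.map Prod.fst) ∧ q.2.2.2.1 = lastInl zs ∧
    q.2.2.2.2 = lastInl (w.map Prod.snd) ∧
    (∀ ℓ ∈ w, ¬(ℓ.1.isRight = true ∧ ℓ.2.isRight = true)) ∧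
    Pp etgt M1 (w.map Prod.fst) zs q.1 ∧ Pp etgt M2 zs (w.map Prod.snd) q.2.1

theorem pp_step {M : DFA (Lett V E) σ} {as bs : List (PadL V E)} (hlen : as.length = bs.length)
    {s s' : σ ⊕ Unit} {x z : PadL V E} (h : Pp etgt M as bs s)
    (hs : s' ∈ mstep etgt M s (lastInl as) (lastInl bs) (x, z)) :
    Pp etgt M (as ++ [x]) (bs ++ [z]) s' := by
  cases s with
  | inl q =>
    have h' : q = M.evalFrom M.start (as.zip bs) := h
    rcases hs with hs | ⟨hs, hacc, hx, hz⟩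
    · subst hs
      rw [Pp]
      rw [List.zip_append hlen]
      rw [h']
      simp [DFA.evalFrom_of_append]
    · subst hs
      have hx' : x = Sum.inr ((lastInl as).map etgt) := hx
      have hz' : z = Sum.inr ((lastInl bs).map etgt) := hz
      rw [Pp]
      refine ⟨as.length, by simp, by simp [← hlen], ?_, ?_, ?_⟩
      · rw [List.take_append_of_le_length le_rfl, List.take_of_length_le le_rfl,
          hlen, List.take_append_of_le_length le_rfl, List.take_of_length_le le_rfl]
        rw [DFA.mem_accepts]
        show M.evalFrom M.start _ ∈ M.accept
        rw [← h']
        exact hacc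
      · rw [List.drop_left, List.take_append_of_le_length le_rfl,
          List.take_of_length_le le_rfl]
        rw [hx']
        simp
      · rw [hlen, List.drop_left, List.take_append_of_le_length le_rfl,
          List.take_of_length_le le_rfl]
        rw [hz']
        simp
  | inr u =>
    rcases hs with ⟨hs, hx, hz⟩
    subst hs
    obtain ⟨k, hk1, hk2, hacc, hda, hdb⟩ := h
    rw [Pp]
    have hta : (as ++ [x]).take k = as.take k := List.take_append_of_le_length hk1
    have htb : (bs ++ [z]).take k = bs.take k := List.take_append_of_le_length hk2
    have hx' : x = Sum.inr ((lastInl as).map etgt) := hx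
    have hz' : z = Sum.inr ((lastInl bs).map etgt) := hz
    refine ⟨k, by simp; omega, by simp; omega, by rw [hta, htb]; exact hacc, ?_, ?_⟩
    · rw [List.drop_append_of_le_length hk1, hta, hda]
      have hlx : lastInl as = lastInl (as.take k) := by
        conv_lhs => rw [← List.take_append_drop k as, hda]
        exact lastInl_append_replicate_inr _ _ _
      rw [hlx] at hx'
      rw [hx']
      rw [← List.replicate_succ']
      congr 1
      simp; omega
    · rw [List.drop_append_of_le_length hk2, htb, hdb]
      have hlz : lastInl bs = lastInl (bs.take k) := by
        conv_lhs => rw [← List.take_append_drop k bs, hdb]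
        exact lastInl_append_replicate_inr _ _ _
      rw [hlz] at hz'
      rw [hz']
      rw [← List.replicate_succ']
      congr 1
      simp; omega

theorem inv_step {M1 : DFA (Lett V E) σ1} {M2 : DFA (Lett V E) σ2}
    {w : List (Lett V E)} {q q' : CQ σ1 σ2 E} {ℓ : Lett V E}
    (h : Inv etgt M1 M2 w q) (hs : q' ∈ (compNFA etgt M1 M2).step q ℓ) :
    Inv etgt M1 M2 (w ++ [ℓ]) q' := by
  obtain ⟨zs, hzlen, hlx, hlz, hly, hlet, hP1, hP2⟩ := h
  obtain ⟨hnp, z, he1, he2, he3, hm1, hm2⟩ := hs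
  refine ⟨zs ++ [z], by simp [hzlen], ?_, ?_, ?_, ?_, ?_, ?_⟩
  · rw [he1, hlx, List.map_append]
    simp only [List.map_cons, List.map_nil]
    rw [lastInl_append_upd]
  · rw [he2, hlz, lastInl_append_upd]
  · rw [he3, hly, List.map_append]
    simp only [List.map_cons, List.map_nil]
    rw [lastInl_append_upd]
  · intro ℓ' hmem
    rcases List.mem_append.1 hmem with hmem | hmem
    · exact hlet ℓ' hmem
    · rw [List.mem_singleton.1 hmem]; exact hnp
  · rw [List.map_append]
    refine pp_step etgt (by simp [hzlen]) hP1 ?_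
    rw [← hlx, ← hlz]
    exact hm1
  · rw [List.map_append]
    refine pp_step etgt (by simp [hzlen]) hP2 ?_
    rw [← hlz, ← hly]
    exact hm2

theorem inv_of_mem {M1 : DFA (Lett V E) σ1} {M2 : DFA (Lett V E) σ2}
    (w : List (Lett V E)) :
    ∀ q ∈ (compNFA etgt M1 M2).evalFrom (compNFA etgt M1 M2).start w, Inv etgt M1 M2 w q := by
  induction w using List.reverseRecOn with
  | nil =>
    intro q hq
    have : q = (.inl M1.start, .inl M2.start, none, none, none) := hq
    subst this
    exact ⟨[], rfl, rfl, rfl, rfl, by simp, rfl, rfl⟩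
  | append_singleton w ℓ ih =>
    intro q hq
    rw [NFA.evalFrom_append, NFA.evalFrom_singleton, NFA.mem_stepSet] at hq
    obtain ⟨p, hp, hstep⟩ := hq
    exact inv_step etgt (ih p hp) hstep

theorem assemble {M : DFA (Lett V E) σ} {as bs : List (PadL V E)} {n : ℕ}
    (ha : as.length = n) (hb : bs.length = n) {s : σ ⊕ Unit} (hP : Pp etgt M as bs s)
    {l : List (Lett V E)} (hok : okc M s l) :
    ∃ w1 ∈ M.accepts,
      as ++ l.map Prod.fst = (w1.map Prod.fst) ++
        List.replicate (n + l.length - w1.length)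
          (Sum.inr ((lastInl (w1.map Prod.fst)).map etgt)) ∧
      bs ++ l.map Prod.snd = (w1.map Prod.snd) ++
        List.replicate (n + l.length - w1.length)
          (Sum.inr ((lastInl (w1.map Prod.snd)).map etgt)) ∧
      w1.length ≤ n + l.length := by
  cases s with
  | inl q =>
    refine ⟨as.zip bs ++ l, ?_, ?_, ?_, ?_⟩
    · rw [DFA.mem_accepts]
      show M.evalFrom M.start _ ∈ M.accept
      rw [DFA.evalFrom_of_append, ← hP]
      exact hok
    · have hzl : (as.zip bs).length = n := by rw [List.length_zip]; omega
      have hlen : (as.zip bs ++ l).length = n + l.length := by simp [hzl]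
      rw [hlen]
      rw [List.map_append, List.map_fst_zip (l₁ := as) (l₂ := bs) (by omega)]
      simp
    · have hzl : (as.zip bs).length = n := by rw [List.length_zip]; omega
      have hlen : (as.zip bs ++ l).length = n + l.length := by simp [hzl]
      rw [hlen]
      rw [List.map_append, List.map_snd_zip (l₁ := as) (l₂ := bs) (by omega)]
      simp
    · rw [List.length_append, List.length_zip]; omega
  | inr u =>
    have hl : l = [] := hok
    subst hl
    obtain ⟨k, hk1, hk2, hacc, hda, hdb⟩ := hP
    have hzlen : ((as.take k).zip (bs.take k)).length = k := by
      rw [List.length_zip, List.length_take, List.length_take]; omega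
    refine ⟨(as.take k).zip (bs.take k), hacc, ?_, ?_, ?_⟩
    · have h1 : ((as.take k).zip (bs.take k)).map Prod.fst = as.take k := by
        apply List.map_fst_zip
        simp only [List.length_take]; omega
      rw [h1, hzlen]
      simp only [List.map_nil, List.append_nil, List.length_nil, Nat.add_zero]
      conv_lhs => rw [← List.take_append_drop k as, hda]
      congr 2
      omega
    · have h1 : ((as.take k).zip (bs.take k)).map Prod.snd = bs.take k := by
        apply List.map_snd_zip
        simp only [List.length_take]; omega
      rw [h1, hzlen]
      simp only [List.map_nil, List.append_nil, List.length_nil, Nat.add_zero]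
      conv_lhs => rw [← List.take_append_drop k bs, hdb]
      congr 2
      omega
    · rw [hzlen]; simp only [List.length_nil]; omega

end B

section C
variable {V E : Type} (etgt : E → V) {σ1 σ2 : Type}

theorem comp_sound {M1 : DFA (Lett V E) σ1} {M2 : DFA (Lett V E) σ2}
    {R1 R2 : Set (List E × List E)}
    (hM1 : M1.accepts = {w | ∃ p ∈ R1, w = deltaPair etgt p.1 p.2})
    (hM2 : M2.accepts = {w | ∃ p ∈ R2, w = deltaPair etgt p.1 p.2})
    (hne1 : ∀ p ∈ R1, p.1 ≠ [] ∧ p.2 ≠ [])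
    {w : List (Lett V E)} (hw : w ∈ (compNFA etgt M1 M2).accepts) :
    ∃ m u v, (u, m) ∈ R1 ∧ (m, v) ∈ R2 ∧ w = deltaPair etgt u v := by
  obtain ⟨q, hqacc, hqe⟩ := hw
  obtain ⟨zs, hzlen, hlx, hlz, hly, hlet, hP1, hP2⟩ := inv_of_mem etgt w q hqe
  obtain ⟨zs', hok1, hok2⟩ := hqacc
  rw [hlx] at hok1
  rw [hly] at hok2
  have hxlen : (w.map Prod.fst).length = w.length := by simp
  have hylen : (w.map Prod.snd).length = w.length := by simp
  obtain ⟨w1, hw1acc, hXeq, hZ1eq, hw1len⟩ := assemble etgt hxlen hzlen hP1 hok1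
  obtain ⟨w2, hw2acc, hZ2eq, hYeq, hw2len⟩ := assemble etgt hzlen hylen hP2 hok2
  -- identify the accepted words of the two machines
  rw [hM1] at hw1acc
  obtain ⟨⟨u, m⟩, hum, hw1d'⟩ := hw1acc
  replace hw1d : w1 = deltaPair etgt u m := hw1d'
  rw [hM2] at hw2acc
  obtain ⟨⟨m2, v⟩, hmv, hw2d'⟩ := hw2acc
  replace hw2d : w2 = deltaPair etgt m2 v := hw2d'
  -- lengths of the suffix lists
  have hl1len : ((zs'.map fun z =>
      ((Sum.inr ((lastInl (w.map Prod.fst)).map etgt) : PadL V E), (Sum.inl z : PadL V E)))).length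
      = zs'.length := by simp
  have hl2len : ((zs'.map fun z =>
      ((Sum.inl z : PadL V E), (Sum.inr ((lastInl (w.map Prod.snd)).map etgt) : PadL V E)))).length
      = zs'.length := by simp
  set N := w.length + zs'.length with hN
  have huK : u.length ≤ w1.length := by rw [hw1d, delta_length]; omega
  have hmK : m.length ≤ w1.length := by rw [hw1d, delta_length]; omega
  have hm2K : m2.length ≤ w2.length := by rw [hw2d, delta_length]; omega
  have hvK : v.length ≤ w2.length := by rw [hw2d, delta_length]; omega
  have hKN1 : w1.length ≤ N := by rw [hN]; rw [hl1len] at hw1len; exact hw1len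
  have hKN2 : w2.length ≤ N := by rw [hN]; rw [hl2len] at hw2len; exact hw2len
  -- the full first column
  have e1 : w.map Prod.fst ++
      List.replicate zs'.length (Sum.inr ((lastInl (w.map Prod.fst)).map etgt) : PadL V E)
      = padded etgt u N := by
    have h0 := hXeq
    rw [List.map_map] at h0
    have hc : (Prod.fst ∘ fun z =>
        ((Sum.inr ((lastInl (w.map Prod.fst)).map etgt) : PadL V E), (Sum.inl z : PadL V E)))
        = fun _ => (Sum.inr ((lastInl (w.map Prod.fst)).map etgt) : PadL V E) := rfl
    rw [hc, List.map_const'] at h0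
    have hfst : w1.map Prod.fst = padded etgt u w1.length := by
      rw [hw1d, map_fst_delta, ← delta_length etgt u m, ← hw1d]
    rw [hfst, lastInl_padded, ← padSym_eq, hl1len,
      ← padded_split etgt huK hKN1] at h0
    exact h0
  -- the middle column, from machine 1
  have e2 : zs ++ zs'.map (Sum.inl : E → PadL V E) = padded etgt m N := by
    have h0 := hZ1eq
    rw [List.map_map] at h0
    have hc : (Prod.snd ∘ fun z =>
        ((Sum.inr ((lastInl (w.map Prod.fst)).map etgt) : PadL V E), (Sum.inl z : PadL V E)))
        = (Sum.inl : E → PadL V E) := rfl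
    rw [hc] at h0
    have hsnd : w1.map Prod.snd = padded etgt m w1.length := by
      rw [hw1d, map_snd_delta, ← delta_length etgt u m, ← hw1d]
    rw [hsnd, lastInl_padded, ← padSym_eq, hl1len,
      ← padded_split etgt hmK hKN1] at h0
    exact h0
  -- the middle column, from machine 2
  have e3 : zs ++ zs'.map (Sum.inl : E → PadL V E) = padded etgt m2 N := by
    have h0 := hZ2eq
    rw [List.map_map] at h0
    have hc : (Prod.fst ∘ fun z =>
        ((Sum.inl z : PadL V E), (Sum.inr ((lastInl (w.map Prod.snd)).map etgt) : PadL V E)))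
        = (Sum.inl : E → PadL V E) := rfl
    rw [hc] at h0
    have hfst : w2.map Prod.fst = padded etgt m2 w2.length := by
      rw [hw2d, map_fst_delta, ← delta_length etgt m2 v, ← hw2d]
    rw [hfst, lastInl_padded, ← padSym_eq, hl2len,
      ← padded_split etgt hm2K hKN2] at h0
    exact h0
  -- the full second column
  have e4 : w.map Prod.snd ++
      List.replicate zs'.length (Sum.inr ((lastInl (w.map Prod.snd)).map etgt) : PadL V E)
      = padded etgt v N := by
    have h0 := hYeq
    rw [List.map_map] at h0
    have hc : (Prod.snd ∘ fun z =>
        ((Sum.inl z : PadL V E), (Sum.inr ((lastInl (w.map Prod.snd)).map etgt) : PadL V E)))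
        = fun _ => (Sum.inr ((lastInl (w.map Prod.snd)).map etgt) : PadL V E) := rfl
    rw [hc, List.map_const'] at h0
    have hsnd : w2.map Prod.snd = padded etgt v w2.length := by
      rw [hw2d, map_snd_delta, ← delta_length etgt m2 v, ← hw2d]
    rw [hsnd, lastInl_padded, ← padSym_eq, hl2len,
      ← padded_split etgt hvK hKN2] at h0
    exact h0
  -- m2 = m
  have hm2m : m2 = m := by
    have := e2.symm.trans e3
    have h2 := congrArg (List.filterMap Sum.getLeft?) this
    rw [decode_padded, decode_padded] at h2
    exact h2.symm
  rw [hm2m] at hmv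
  -- u and v fit in w
  have hune : u ≠ [] := (hne1 _ hum).1
  have hupos : 0 < u.length := List.length_pos_iff.2 hune
  have hcol : ∀ (a : List E)
      (col : List (PadL V E)) (cc : PadL V E), col.length = w.length →
      col ++ List.replicate zs'.length cc = padded etgt a N →
      cc = Sum.inr ((lastInl col).map etgt) →
      a.length ≤ w.length ∧ col = padded etgt a w.length := by
    intro a col cc hcollen hcoleq hcc
    have halen : a.length ≤ w.length := by
      rcases Nat.eq_zero_or_pos zs'.length with hz0 | hzpos
      · have := congrArg List.length hcoleq
        rw [List.length_append, List.length_replicate, padded_length, hcollen] at this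
        omega
      · by_contra hlt
        push_neg at hlt
        have h1 : (col ++ List.replicate zs'.length cc)[w.length]? = some cc := by
          rw [List.getElem?_append_right (by omega), hcollen, Nat.sub_self,
            List.getElem?_replicate, if_pos hzpos]
        rw [hcoleq, pg_lt etgt hlt] at h1
        rw [hcc] at h1
        simp at h1
    refine ⟨halen, ?_⟩
    have := congrArg (List.take w.length) hcoleq
    rw [List.take_left' hcollen, take_padded etgt halen (by omega)] at this
    exact this
  obtain ⟨hulen, hxcol⟩ := hcol u (w.map Prod.fst) _ hxlen e1 rfl
  obtain ⟨hvlen, hycol⟩ := hcol v (w.map Prod.snd) _ hylen e4 rfl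
  -- w.length = max u.length v.length
  have hn1 : 1 ≤ w.length := by omega
  have hidx : w.length - 1 < w.length := by omega
  have hlast := hlet (w[w.length - 1]) (List.getElem_mem hidx)
  have hmax : w.length = max u.length v.length := by
    rcases le_or_gt w.length (max u.length v.length) with h | h
    · omega
    · exfalso
      have hu1 : u.length ≤ w.length - 1 := by omega
      have hv1 : v.length ≤ w.length - 1 := by omega
      have hf : (w.map Prod.fst)[w.length - 1]? = some ((w[w.length - 1]).1) := by
        rw [List.getElem?_map, List.getElem?_eq_getElem hidx]; rfl
      have hg : (w.map Prod.snd)[w.length - 1]? = some ((w[w.length - 1]).2) := by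
        rw [List.getElem?_map, List.getElem?_eq_getElem hidx]; rfl
      rw [hxcol, pg_ge etgt hu1 (by omega)] at hf
      rw [hycol, pg_ge etgt hv1 (by omega)] at hg
      apply hlast
      constructor
      · rw [show (w[w.length - 1]).1 = padSym etgt u from (Option.some_injective _ hf).symm]
        rfl
      · rw [show (w[w.length - 1]).2 = padSym etgt v from (Option.some_injective _ hg).symm]
        rfl
  refine ⟨m, u, v, hum, hmv, ?_⟩
  rw [delta_eq, ← hmax, ← hxcol, ← hycol, zip_self_eq]

-- completeness direction
def runSt (M1 : DFA (Lett V E) σ1) (M2 : DFA (Lett V E) σ2)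
    (X Z Y : List (PadL V E)) (k1 k2 i : ℕ) : CQ σ1 σ2 E :=
  (if i ≤ k1 then Sum.inl (M1.evalFrom M1.start ((X.take i).zip (Z.take i))) else Sum.inr (),
   if i ≤ k2 then Sum.inl (M2.evalFrom M2.start ((Z.take i).zip (Y.take i))) else Sum.inr (),
   lastInl (X.take i), lastInl (Z.take i), lastInl (Y.take i))

theorem mstep_run {σ : Type} {M : DFA (Lett V E) σ} {a b : List E} {n : ℕ}
    (hacc : deltaPair etgt a b ∈ M.accepts)
    {i : ℕ} (hi : i < n) {x z : PadL V E}
    (hx : ((padded etgt a n).take n)[i]? = some x)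
    (hz : ((padded etgt b n).take n)[i]? = some z) :
    (if i + 1 ≤ max a.length b.length then
        Sum.inl (M.evalFrom M.start
          ((((padded etgt a n).take n).take (i+1)).zip (((padded etgt b n).take n).take (i+1))))
      else Sum.inr ())
    ∈ mstep etgt M
        (if i ≤ max a.length b.length then
            Sum.inl (M.evalFrom M.start
              ((((padded etgt a n).take n).take i).zip (((padded etgt b n).take n).take i)))
          else Sum.inr ())
        (lastInl (((padded etgt a n).take n).take i))
        (lastInl (((padded etgt b n).take n).take i))
        (x, z) := by
  set k := max a.length b.length with hk
  set A := (padded etgt a n).take n with hA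
  set B := (padded etgt b n).take n with hB
  have hak : a.length ≤ k := le_max_left _ _
  have hbk : b.length ≤ k := le_max_right _ _
  have hAl : A.length = n := by rw [hA, List.length_take, padded_length]; omega
  have hBl : B.length = n := by rw [hB, List.length_take, padded_length]; omega
  have hAg : A[i]? = (padded etgt a n)[i]? := by
    rw [hA, List.getElem?_take, if_pos hi]
  have hBg : B[i]? = (padded etgt b n)[i]? := by
    rw [hB, List.getElem?_take, if_pos hi]
  have hAtake : ∀ j, a.length ≤ j → j ≤ n → A.take j = padded etgt a j := by
    intro j h1 h2
    rw [hA, List.take_take, min_eq_left h2]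
    exact take_padded etgt h1 h2
  have hBtake : ∀ j, b.length ≤ j → j ≤ n → B.take j = padded etgt b j := by
    intro j h1 h2
    rw [hB, List.take_take, min_eq_left h2]
    exact take_padded etgt h1 h2
  rcases lt_trichotomy i k with hik | hik | hik
  · rw [if_pos (by omega), if_pos (by omega)]
    left
    congr 1
    have h1 : A.take (i+1) = A.take i ++ [x] := by
      rw [List.take_succ, hx]; rfl
    have h2 : B.take (i+1) = B.take i ++ [z] := by
      rw [List.take_succ, hz]; rfl
    rw [h1, h2, zip_snoc (by simp only [List.length_take, padded_length]; omega),
      DFA.evalFrom_append_singleton]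
  · subst hik
    rw [if_pos le_rfl, if_neg (by omega)]
    have hxv : x = padSym etgt a := by
      rw [hAg, pg_ge etgt (by omega) (by omega)] at hx
      exact (Option.some_injective _ hx).symm
    have hzv : z = padSym etgt b := by
      rw [hBg, pg_ge etgt (by omega) (by omega)] at hz
      exact (Option.some_injective _ hz).symm
    have hta : A.take k = padded etgt a k := hAtake k (by omega) (by omega)
    have htb : B.take k = padded etgt b k := hBtake k (by omega) (by omega)
    refine Or.inr ⟨rfl, ?_, ?_, ?_⟩
    · rw [hta, htb, ← delta_eq]
      exact hacc
    · show x = Sum.inr _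
      rw [hxv, hta, lastInl_padded, padSym_eq]
    · show z = Sum.inr _
      rw [hzv, htb, lastInl_padded, padSym_eq]
  · rw [if_neg (by omega), if_neg (by omega)]
    have hxv : x = padSym etgt a := by
      rw [hAg, pg_ge etgt (by omega) (by omega)] at hx
      exact (Option.some_injective _ hx).symm
    have hzv : z = padSym etgt b := by
      rw [hBg, pg_ge etgt (by omega) (by omega)] at hz
      exact (Option.some_injective _ hz).symm
    have hta : A.take i = padded etgt a i := hAtake i (by omega) (by omega)
    have htb : B.take i = padded etgt b i := hBtake i (by omega) (by omega)
    refine ⟨rfl, ?_, ?_⟩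
    · show x = Sum.inr _
      rw [hxv, hta, lastInl_padded, padSym_eq]
    · show z = Sum.inr _
      rw [hzv, htb, lastInl_padded, padSym_eq]

theorem okc_run₁ {σ : Type} {M : DFA (Lett V E) σ} {a b : List E} {n : ℕ}
    (han : a.length ≤ n)
    (hacc : deltaPair etgt a b ∈ M.accepts) :
    okc M
      (if n ≤ max a.length b.length then
          Sum.inl (M.evalFrom M.start
            ((padded etgt a n).zip ((padded etgt b n).take n)))
        else Sum.inr ())
      ((b.drop n).map fun z =>
        ((Sum.inr (a.getLast?.map etgt) : PadL V E), (Sum.inl z : PadL V E))) := by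
  set k := max a.length b.length with hk
  rcases lt_or_ge k n with hkn | hkn
  · rw [if_neg (by omega)]
    show _ = _
    rw [List.drop_eq_nil_of_le (by omega : b.length ≤ n)]
    rfl
  · rw [if_pos hkn]
    show M.evalFrom _ _ ∈ M.accept
    rw [← DFA.evalFrom_of_append]
    have hpad : (Sum.inr (a.getLast?.map etgt) : PadL V E) = padSym etgt a :=
      (padSym_eq etgt a).symm
    rw [hpad]
    have key : (padded etgt a n).zip ((padded etgt b n).take n) ++
        ((b.drop n).map fun z => ((padSym etgt a : PadL V E), (Sum.inl z : PadL V E)))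
        = deltaPair etgt a b := by
      rcases le_or_gt b.length n with hbn | hbn
      · rw [List.drop_eq_nil_of_le hbn]
        simp only [List.map_nil, List.append_nil]
        rw [List.take_of_length_le (by rw [padded_length]; omega), delta_eq]
        rw [show a.length ⊔ b.length = n from by omega]
      · have hkb : k = b.length := by omega
        have hbn' : padded etgt b n = b.map Sum.inl := by
          rw [padded, Nat.sub_eq_zero_of_le (by omega), List.replicate_zero,
            List.append_nil]
        rw [delta_eq, show a.length ⊔ b.length = k from rfl]
        have hpbk : padded etgt b k = b.map Sum.inl := by
          rw [padded, hkb, Nat.sub_self, List.replicate_zero, List.append_nil]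
        rw [hpbk, hbn']
        have hsplitb : b.map (Sum.inl : E → PadL V E)
            = (b.take n).map Sum.inl ++ (b.drop n).map Sum.inl := by
          rw [← List.map_append, List.take_append_drop]
        rw [← List.map_take]
        conv_rhs => rw [hsplitb]
        rw [padded_split etgt han hkn, List.zip_append
          (by rw [padded_length_of_le etgt han, List.length_map, List.length_take]; omega)]
        congr 1
        rw [show k - n = (b.drop n).length from by simp; omega, zip_replicate_left]
    rw [key]
    exact hacc

theorem okc_run₂ {σ : Type} {M : DFA (Lett V E) σ} {a b : List E} {n : ℕ}
    (hbn : b.length ≤ n)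
    (hacc : deltaPair etgt a b ∈ M.accepts) :
    okc M
      (if n ≤ max a.length b.length then
          Sum.inl (M.evalFrom M.start
            (((padded etgt a n).take n).zip (padded etgt b n)))
        else Sum.inr ())
      ((a.drop n).map fun z =>
        ((Sum.inl z : PadL V E), (Sum.inr (b.getLast?.map etgt) : PadL V E))) := by
  set k := max a.length b.length with hk
  rcases lt_or_ge k n with hkn | hkn
  · rw [if_neg (by omega)]
    show _ = _
    rw [List.drop_eq_nil_of_le (by omega : a.length ≤ n)]
    rfl
  · rw [if_pos hkn]
    show M.evalFrom _ _ ∈ M.accept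
    rw [← DFA.evalFrom_of_append]
    have hpad : (Sum.inr (b.getLast?.map etgt) : PadL V E) = padSym etgt b :=
      (padSym_eq etgt b).symm
    rw [hpad]
    have key : ((padded etgt a n).take n).zip (padded etgt b n) ++
        ((a.drop n).map fun z => ((Sum.inl z : PadL V E), (padSym etgt b : PadL V E)))
        = deltaPair etgt a b := by
      rcases le_or_gt a.length n with han | han
      · rw [List.drop_eq_nil_of_le han]
        simp only [List.map_nil, List.append_nil]
        rw [List.take_of_length_le (by rw [padded_length]; omega), delta_eq]
        rw [show a.length ⊔ b.length = n from by omega]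
      · have hka : k = a.length := by omega
        have han' : padded etgt a n = a.map Sum.inl := by
          rw [padded, Nat.sub_eq_zero_of_le (by omega), List.replicate_zero,
            List.append_nil]
        rw [delta_eq, show a.length ⊔ b.length = k from rfl]
        have hpak : padded etgt a k = a.map Sum.inl := by
          rw [padded, hka, Nat.sub_self, List.replicate_zero, List.append_nil]
        rw [hpak, han']
        have hsplita : a.map (Sum.inl : E → PadL V E)
            = (a.take n).map Sum.inl ++ (a.drop n).map Sum.inl := by
          rw [← List.map_append, List.take_append_drop]
        rw [← List.map_take]
        conv_rhs => rw [hsplita]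
        rw [padded_split etgt hbn hkn, List.zip_append
          (by rw [padded_length_of_le etgt hbn, List.length_map, List.length_take]; omega)]
        congr 1
        rw [show k - n = (a.drop n).length from by simp; omega, zip_replicate_right]
    rw [key]
    exact hacc

theorem comp_complete {M1 : DFA (Lett V E) σ1} {M2 : DFA (Lett V E) σ2}
    {R1 R2 : Set (List E × List E)}
    (hM1 : M1.accepts = {w | ∃ p ∈ R1, w = deltaPair etgt p.1 p.2})
    (hM2 : M2.accepts = {w | ∃ p ∈ R2, w = deltaPair etgt p.1 p.2})
    {u m v : List E} (hum : (u, m) ∈ R1) (hmv : (m, v) ∈ R2) :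
    deltaPair etgt u v ∈ (compNFA etgt M1 M2).accepts := by
  have hacc1 : deltaPair etgt u m ∈ M1.accepts := by
    rw [hM1]; exact ⟨(u, m), hum, rfl⟩
  have hacc2 : deltaPair etgt m v ∈ M2.accepts := by
    rw [hM2]; exact ⟨(m, v), hmv, rfl⟩
  set n := max u.length v.length with hn
  have hun : u.length ≤ n := le_max_left _ _
  have hvn : v.length ≤ n := le_max_right _ _
  set X := (padded etgt u n).take n with hX
  set Z := (padded etgt m n).take n with hZ
  set Y := (padded etgt v n).take n with hY
  have hXl : X.length = n := by rw [hX, List.length_take, padded_length]; omega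
  have hZl : Z.length = n := by rw [hZ, List.length_take, padded_length]; omega
  have hYl : Y.length = n := by rw [hY, List.length_take, padded_length]; omega
  have hXfull : X = padded etgt u n := by
    rw [hX]; exact List.take_of_length_le (by rw [padded_length]; omega)
  have hYfull : Y = padded etgt v n := by
    rw [hY]; exact List.take_of_length_le (by rw [padded_length]; omega)
  have hw : deltaPair etgt u v = X.zip Y := by
    rw [hXfull, hYfull, delta_eq, ← hn]
  have hziplen : (X.zip Y).length = n := by
    rw [List.length_zip, hXl, hYl]; omega
  set N := compNFA etgt M1 M2 with hN
  have key : ∀ i, i ≤ n →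
      runSt M1 M2 X Z Y (max u.length m.length) (max m.length v.length) i
        ∈ N.evalFrom N.start ((X.zip Y).take i) := by
    intro i
    induction i with
    | zero =>
      intro _
      rw [List.take_zero]
      show _ ∈ N.start
      show _ ∈ ({((Sum.inl M1.start : σ1 ⊕ Unit), (Sum.inl M2.start : σ2 ⊕ Unit),
        (none : Option E), (none : Option E), (none : Option E))} : Set (CQ σ1 σ2 E))
      rw [Set.mem_singleton_iff, runSt]
      simp [lastInl]
    | succ i ih =>
      intro hsucc
      have hi : i < n := by omega
      specialize ih (by omega)
      have hxg : X[i]? = some (X[i]'(by omega)) := List.getElem?_eq_getElem (by omega)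
      have hyg : Y[i]? = some (Y[i]'(by omega)) := List.getElem?_eq_getElem (by omega)
      have hzg : Z[i]? = some (Z[i]'(by omega)) := List.getElem?_eq_getElem (by omega)
      have hgo : (X.zip Y)[i]? = some ((X[i]'(by omega)), (Y[i]'(by omega))) := by
        rw [List.getElem?_eq_getElem (by omega : i < (X.zip Y).length)]
        congr 1
        exact List.getElem_zip
      have htake : (X.zip Y).take (i+1)
          = (X.zip Y).take i ++ [((X[i]'(by omega)), (Y[i]'(by omega)))] := by
        rw [List.take_succ, hgo]; rfl
      rw [htake, NFA.evalFrom_append, NFA.evalFrom_singleton, NFA.mem_stepSet]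
      refine ⟨runSt M1 M2 X Z Y (max u.length m.length) (max m.length v.length) i, ih, ?_⟩
      refine ⟨?_, Z[i]'(by omega), ?_, ?_, ?_, ?_, ?_⟩
      · -- not both padding
        rintro ⟨h1, h2⟩
        rcases lt_or_ge i u.length with hu | hu
        · have : X[i]? = some (Sum.inl u[i]) := by
            rw [hX, List.getElem?_take, if_pos hi, pg_lt etgt hu]
          rw [hxg] at this
          have := Option.some_injective _ this
          rw [this] at h1
          simp at h1
        · have hv : i < v.length := by omega
          have : Y[i]? = some (Sum.inl v[i]) := by
            rw [hY, List.getElem?_take, if_pos hi, pg_lt etgt hv]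
          rw [hyg] at this
          have := Option.some_injective _ this
          rw [this] at h2
          simp at h2
      · -- lx update
        show lastInl (X.take (i+1)) = upd (lastInl (X.take i)) _
        rw [List.take_succ, hxg]
        exact lastInl_append_upd _ _
      · show lastInl (Z.take (i+1)) = upd (lastInl (Z.take i)) _
        rw [List.take_succ, hzg]
        exact lastInl_append_upd _ _
      · show lastInl (Y.take (i+1)) = upd (lastInl (Y.take i)) _
        rw [List.take_succ, hyg]
        exact lastInl_append_upd _ _
      · -- machine 1 step
        exact mstep_run etgt hacc1 hi hxg hzg
      · -- machine 2 step
        exact mstep_run etgt hacc2 hi hzg hyg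
  have hfinal := key n le_rfl
  rw [List.take_of_length_le (by omega : (X.zip Y).length ≤ n)] at hfinal
  rw [NFA.mem_accepts]
  refine ⟨runSt M1 M2 X Z Y (max u.length m.length) (max m.length v.length) n, ?_, ?_⟩
  · -- accepting state
    refine ⟨m.drop n, ?_, ?_⟩
    · -- machine 1 continuation
      show okc M1
        (if n ≤ max u.length m.length then
            Sum.inl (M1.evalFrom M1.start ((X.take n).zip (Z.take n)))
          else Sum.inr ())
        ((m.drop n).map fun z => (Sum.inr ((lastInl (X.take n)).map etgt), Sum.inl z))
      have h1 : X.take n = padded etgt u n := by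
        rw [hX, List.take_take, Nat.min_self, ← hX, hXfull]
      have h2 : Z.take n = (padded etgt m n).take n := by
        rw [hZ, List.take_take, Nat.min_self]
      rw [h1, h2, lastInl_padded]
      exact okc_run₁ etgt hun hacc1
    · -- machine 2 continuation
      show okc M2
        (if n ≤ max m.length v.length then
            Sum.inl (M2.evalFrom M2.start ((Z.take n).zip (Y.take n)))
          else Sum.inr ())
        ((m.drop n).map fun z => (Sum.inl z, Sum.inr ((lastInl (Y.take n)).map etgt)))
      have h1 : Y.take n = padded etgt v n := by
        rw [hY, List.take_take, Nat.min_self, ← hY, hYfull]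
      have h2 : Z.take n = (padded etgt m n).take n := by
        rw [hZ, List.take_take, Nat.min_self]
      rw [h1, h2, lastInl_padded]
      exact okc_run₂ etgt hvn hacc2
  · rw [hw]
    exact hfinal

theorem sync_comp [Finite E] {R1 R2 : Set (List E × List E)}
    (h1 : Language.IsRegular (show Language (Lett V E) from
      {w | ∃ p ∈ R1, w = deltaPair etgt p.1 p.2}))
    (h2 : Language.IsRegular (show Language (Lett V E) from
      {w | ∃ p ∈ R2, w = deltaPair etgt p.1 p.2}))
    (hne1 : ∀ p ∈ R1, p.1 ≠ [] ∧ p.2 ≠ []) :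
    Language.IsRegular (show Language (Lett V E) from
      {w | ∃ p ∈ {p : List E × List E | ∃ m, (p.1, m) ∈ R1 ∧ (m, p.2) ∈ R2},
        w = deltaPair etgt p.1 p.2}) := by
  obtain ⟨σ1, i1, M1, hM1⟩ := h1
  obtain ⟨σ2, i2, M2, hM2⟩ := h2
  haveI := i1
  haveI := i2
  haveI : Fintype E := Fintype.ofFinite _
  haveI : Fintype (CQ σ1 σ2 E) := inferInstance
  refine ⟨Set (CQ σ1 σ2 E), Set.fintype, (compNFA etgt M1 M2).toDFA, ?_⟩
  rw [NFA.toDFA_correct]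
  ext w
  constructor
  · intro hw
    obtain ⟨m, u, v, hum, hmv, rfl⟩ := comp_sound etgt hM1 hM2 hne1 hw
    exact ⟨(u, v), ⟨m, hum, hmv⟩, rfl⟩
  · rintro ⟨⟨u, v⟩, ⟨m, hum, hmv⟩, rfl⟩
    exact comp_complete etgt hM1 hM2 hum hmv

theorem isRegular_image_map {α β : Type} (g : α → β) {L : Set (List α)}
    (h : Language.IsRegular (show Language α from L)) :
    Language.IsRegular (show Language β from (List.map g '' L)) := by
  obtain ⟨σ, fin, M, hM⟩ := h
  let N : NFA β σ :=
    { step := fun q b => {q' | ∃ a, g a = b ∧ q' = M.step q a},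
      start := {M.start}, accept := M.accept }
  have hev : ∀ (w' : List β) (q : σ),
      q ∈ N.evalFrom N.start w' ↔ ∃ w, w.map g = w' ∧ q = M.evalFrom M.start w := by
    intro w'
    induction w' using List.reverseRecOn with
    | nil =>
      intro q
      constructor
      · intro hq
        exact ⟨[], rfl, hq⟩
      · rintro ⟨w, hw, rfl⟩
        have hwn : w = [] := List.map_eq_nil_iff.1 hw
        subst hwn
        rfl
    | append_singleton w' b ih =>
      intro q
      rw [NFA.evalFrom_append, NFA.evalFrom_singleton, NFA.mem_stepSet]
      constructor
      · rintro ⟨p, hp, a, hga, rfl⟩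
        obtain ⟨w, hw, rfl⟩ := (ih p).1 hp
        refine ⟨w ++ [a], ?_, ?_⟩
        · rw [List.map_append, hw]
          simp [hga]
        · rw [DFA.evalFrom_append_singleton]
      · rintro ⟨w, hw, rfl⟩
        rcases List.eq_nil_or_concat w with rfl | ⟨w0, a, rfl⟩
        · simp at hw
        · rw [List.concat_eq_append, List.map_append] at hw
          have hsp := List.append_inj' hw (by simp)
          refine ⟨M.evalFrom M.start w0, (ih _).2 ⟨w0, hsp.1, rfl⟩, a, ?_, ?_⟩
          · simpa using hsp.2
          · rw [List.concat_eq_append, DFA.evalFrom_append_singleton]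
  have hacc : N.accepts = (List.map g '' M.accepts : Set (List β)) := by
    ext w'
    rw [NFA.mem_accepts]
    constructor
    · rintro ⟨q, hqa, hqe⟩
      obtain ⟨w, hw, rfl⟩ := (hev w' q).1 hqe
      exact ⟨w, hqa, hw⟩
    · rintro ⟨w, hwacc, rfl⟩
      exact ⟨M.evalFrom M.start w, hwacc, (hev _ _).2 ⟨w, rfl, rfl⟩⟩
  haveI : Finite σ := Finite.of_fintype _
  refine ⟨Set σ, Fintype.ofFinite _, N.toDFA, ?_⟩
  rw [NFA.toDFA_correct, hacc, hM]

end C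



section SgpdLemmas

variable {O A E : Type}

theorem eval_cons (S : PreSgpd O A) (lab : E → A) (e : E) (l : List E) :
    evalPath? S lab (e :: l) = some ((l.map lab).foldl S.mul (lab e)) := rfl

theorem eval_isSome (S : PreSgpd O A) (lab : E → A) {l : List E} (h : l ≠ []) :
    ∃ x, evalPath? S lab l = some x := by
  cases l with
  | nil => exact absurd rfl h
  | cons e t => exact ⟨_, rfl⟩

theorem eval_append (S : PreSgpd O A) (lab : E → A) {l1 : List E} (h : l1 ≠ []) (l2 : List E) :
    evalPath? S lab (l1 ++ l2)
      = (evalPath? S lab l1).map (fun x => (l2.map lab).foldl S.mul x) := by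
  cases l1 with
  | nil => exact absurd rfl h
  | cons e t =>
    show some _ = _
    rw [eval_cons, Option.map_some]
    congr 1
    show List.foldl S.mul (lab e) (List.map lab (t ++ l2)) = _
    rw [List.map_append, List.foldl_append]

theorem eval_append_singleton (S : PreSgpd O A) (lab : E → A) {l : List E} (h : l ≠ [])
    (e : E) :
    evalPath? S lab (l ++ [e]) = (evalPath? S lab l).map (fun x => S.mul x (lab e)) := by
  rw [eval_append S lab h]
  rfl

theorem fold_src (S : Sgpd O A) :
    ∀ (la : List A) (a : A),
      List.Chain' (fun p q => S.tgt p = S.src q) (a :: la) →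
      S.src (la.foldl S.mul a) = S.src a := by
  intro la
  induction la with
  | nil => intro a _; rfl
  | cons b t ih =>
    intro a hc
    have h1 : S.tgt a = S.src b := List.isChain_cons_cons.1 hc |>.1
    have h2 : List.Chain' _ (b :: t) := List.isChain_cons_cons.1 hc |>.2
    have h3 : List.Chain' (fun p q => S.tgt p = S.src q) (S.mul a b :: t) := by
      cases t with
      | nil => exact List.isChain_singleton _
      | cons c t' =>
        unfold List.Chain'; rw [List.isChain_cons_cons]
        refine ⟨?_, List.isChain_cons_cons.1 h2 |>.2⟩
        rw [S.tgt_mul a b h1]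
        exact List.isChain_cons_cons.1 h2 |>.1
    show S.src (t.foldl S.mul (S.mul a b)) = S.src a
    rw [ih (S.mul a b) h3, S.src_mul a b h1]

theorem fold_tgt (S : Sgpd O A) :
    ∀ (la : List A) (a : A),
      List.Chain' (fun p q => S.tgt p = S.src q) (a :: la) →
      S.tgt (la.foldl S.mul a) = S.tgt (la.getLastD a) := by
  intro la
  induction la with
  | nil => intro a _; rfl
  | cons b t ih =>
    intro a hc
    have h1 : S.tgt a = S.src b := List.isChain_cons_cons.1 hc |>.1
    have h2 : List.Chain' _ (b :: t) := List.isChain_cons_cons.1 hc |>.2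
    have h3 : List.Chain' (fun p q => S.tgt p = S.src q) (S.mul a b :: t) := by
      cases t with
      | nil => exact List.isChain_singleton _
      | cons c t' =>
        unfold List.Chain'; rw [List.isChain_cons_cons]
        refine ⟨?_, List.isChain_cons_cons.1 h2 |>.2⟩
        rw [S.tgt_mul a b h1]
        exact List.isChain_cons_cons.1 h2 |>.1
    show S.tgt (t.foldl S.mul (S.mul a b)) = S.tgt ((b :: t).getLastD a)
    rw [ih (S.mul a b) h3, List.getLastD_cons]
    cases t with
    | nil => exact S.tgt_mul a b h1
    | cons c t' =>
      rw [List.getLastD_eq_getLast?, List.getLastD_eq_getLast?,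
        List.getLast?_eq_getLast (l := c :: t') (by simp)]
      rfl

theorem fold_assoc (S : Sgpd O A) :
    ∀ (la : List A) (a x : A), S.tgt x = S.src a →
      List.Chain' (fun p q => S.tgt p = S.src q) (a :: la) →
      S.mul x (la.foldl S.mul a) = la.foldl S.mul (S.mul x a) := by
  intro la
  induction la with
  | nil => intro a x _ _; rfl
  | cons b t ih =>
    intro a x hx hc
    have h1 : S.tgt a = S.src b := List.isChain_cons_cons.1 hc |>.1
    have h2 : List.Chain' _ (b :: t) := List.isChain_cons_cons.1 hc |>.2
    have h3 : List.Chain' (fun p q => S.tgt p = S.src q) (S.mul a b :: t) := by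
      cases t with
      | nil => exact List.isChain_singleton _
      | cons c t' =>
        unfold List.Chain'; rw [List.isChain_cons_cons]
        refine ⟨?_, List.isChain_cons_cons.1 h2 |>.2⟩
        rw [S.tgt_mul a b h1]
        exact List.isChain_cons_cons.1 h2 |>.1
    have h4 : S.tgt x = S.src (S.mul a b) := by
      rw [S.src_mul a b h1]; exact hx
    show S.mul x (t.foldl S.mul (S.mul a b)) = t.foldl S.mul (S.mul (S.mul x a) b)
    rw [ih (S.mul a b) x h4 h3, ← S.mul_assoc' x a b hx h1]

end SgpdLemmas


section CLemmas

variable {O A E : Type} {S : Sgpd O A} (C : ChoiceOfReps S.toPreSgpd E)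

theorem chain_labels {l : List E} (h : IsPathChain C.esrc C.etgt l) :
    List.Chain' (fun p q => S.tgt p = S.src q) (l.map C.lab) := by
  unfold List.Chain'; rw [List.isChain_map]
  exact List.IsChain.imp (fun a b hh => by rw [C.lab_tgt, C.lab_src]; exact hh) h

theorem eval_src' {l : List E} (hne : l ≠ []) (hc : IsPathChain C.esrc C.etgt l)
    {x : A} (hx : evalPath? S.toPreSgpd C.lab l = some x) :
    pathSrc? C.esrc l = some (S.src x) := by
  cases l with
  | nil => exact absurd rfl hne
  | cons e t =>
    have hx' : x = (t.map C.lab).foldl S.toPreSgpd.mul (C.lab e) :=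
      (Option.some_injective _ hx).symm
    have hch : List.Chain' (fun p q => S.tgt p = S.src q) (C.lab e :: t.map C.lab) :=
      chain_labels C hc
    show some (C.esrc e) = some (S.src x)
    rw [hx', fold_src S _ _ hch, C.lab_src]

theorem getLastD_map {α β : Type} (f : α → β) (l : List α) (d : α) :
    (l.map f).getLastD (f d) = f (l.getLastD d) := by
  cases l with
  | nil => rfl
  | cons c t =>
    rw [List.getLastD_eq_getLast?, List.getLastD_eq_getLast?, List.getLast?_map,
      List.getLast?_eq_getLast (l := c :: t) (by simp)]
    rfl

theorem eval_tgt' {l : List E} (hne : l ≠ []) (hc : IsPathChain C.esrc C.etgt l)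
    {x : A} (hx : evalPath? S.toPreSgpd C.lab l = some x) :
    pathTgt? C.etgt l = some (S.tgt x) := by
  cases l with
  | nil => exact absurd rfl hne
  | cons e t =>
    have hx' : x = (t.map C.lab).foldl S.toPreSgpd.mul (C.lab e) :=
      (Option.some_injective _ hx).symm
    have hch : List.Chain' (fun p q => S.tgt p = S.src q) (C.lab e :: t.map C.lab) :=
      chain_labels C hc
    have h1 : S.tgt x = S.tgt ((t.map C.lab).getLastD (C.lab e)) := by
      rw [hx']; exact fold_tgt S _ _ hch
    rw [getLastD_map] at h1
    rw [C.lab_tgt] at h1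
    show ((e :: t).getLast?).map C.etgt = some (S.tgt x)
    rw [List.getLast?_cons, h1]
    simp [List.getLastD_eq_getLast?]

theorem chain_append' {u w : List E} (hu : u ≠ []) (hw : w ≠ [])
    (hcu : IsPathChain C.esrc C.etgt u) (hcw : IsPathChain C.esrc C.etgt w)
    (hlink : pathTgt? C.etgt u = pathSrc? C.esrc w) :
    IsPathChain C.esrc C.etgt (u ++ w) := by
  rw [IsPathChain]; unfold List.Chain'; rw [List.isChain_append]
  refine ⟨hcu, hcw, ?_⟩
  intro x hx y hy
  have h1 : pathTgt? C.etgt u = some (C.etgt x) := by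
    rw [pathTgt?, hx]; rfl
  have h2 : pathSrc? C.esrc w = some (C.esrc y) := by
    rw [pathSrc?, hy]; rfl
  have := h1.symm.trans (hlink.trans h2)
  exact Option.some_injective _ this

theorem eval_mul' {u w : List E} (hu : u ≠ []) (hw : w ≠ [])
    (hcu : IsPathChain C.esrc C.etgt u) (hcw : IsPathChain C.esrc C.etgt w)
    {a b : A} (ha : evalPath? S.toPreSgpd C.lab u = some a)
    (hb : evalPath? S.toPreSgpd C.lab w = some b)
    (hlink : pathTgt? C.etgt u = pathSrc? C.esrc w) :
    evalPath? S.toPreSgpd C.lab (u ++ w) = some (S.mul a b) := by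
  cases w with
  | nil => exact absurd rfl hw
  | cons w0 wt =>
    have hb' : b = (wt.map C.lab).foldl S.toPreSgpd.mul (C.lab w0) :=
      (Option.some_injective _ hb).symm
    have hch : List.Chain' (fun p q => S.tgt p = S.src q) (C.lab w0 :: wt.map C.lab) :=
      chain_labels C hcw
    have htga : S.tgt a = S.src (C.lab w0) := by
      have h1 := eval_tgt' C hu hcu ha
      have h2 : pathSrc? C.esrc (w0 :: wt) = some (C.esrc w0) := rfl
      have := h1.symm.trans (hlink.trans h2)
      rw [C.lab_src]
      exact Option.some_injective _ this
    rw [eval_append S.toPreSgpd C.lab hu, ha, Option.map_some]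
    congr 1
    show ((w0 :: wt).map C.lab).foldl S.toPreSgpd.mul a = S.mul a b
    rw [hb', fold_assoc S _ _ _ htga hch]
    rfl

end CLemmas

/-- The relation `K_w` for a word `w`. -/
def relWord {O A E : Type} {S : PreSgpd O A} (C : ChoiceOfReps S E) (w : List E) :
    Set (List E × List E) :=
  { p | p.1 ∈ C.K ∧ p.2 ∈ C.K ∧ pathTgt? C.etgt p.1 = pathSrc? C.esrc w ∧
        evalPath? S C.lab (p.1 ++ w) = evalPath? S C.lab p.2 }

theorem relWord_singleton {O A E : Type} {S : PreSgpd O A} (C : ChoiceOfReps S E) (e : E) :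
    relWord C [e] = relEdge C e := rfl

section RelWord

variable {O A E : Type} {S : Sgpd O A} (C : ChoiceOfReps S.toPreSgpd E)

theorem relWord_snoc {w : List E} (hw : w ≠ []) {e : E}
    (hc : IsPathChain C.esrc C.etgt (w ++ [e])) :
    relWord C (w ++ [e]) =
      {p : List E × List E | ∃ mid, (p.1, mid) ∈ relWord C w ∧ (mid, p.2) ∈ relEdge C e} := by
  have hcw : IsPathChain C.esrc C.etgt w := (List.isChain_append.1 hc).1
  have hsrc : pathSrc? C.esrc (w ++ [e]) = pathSrc? C.esrc w := by
    cases w with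
    | nil => exact absurd rfl hw
    | cons w0 wt => rfl
  have hlaste : ∀ x ∈ w.getLast?, C.etgt x = C.esrc e := by
    intro x hx
    exact (List.isChain_append.1 hc).2.2 x hx e rfl
  ext p
  obtain ⟨u, v⟩ := p
  constructor
  · rintro ⟨hu, hv, htgt, heval⟩
    obtain ⟨hune, hcu⟩ := C.K_path u hu
    have hlink : pathTgt? C.etgt u = pathSrc? C.esrc w := by rw [htgt, hsrc]
    obtain ⟨a, ha⟩ := eval_isSome S.toPreSgpd C.lab hune
    obtain ⟨b, hb⟩ := eval_isSome S.toPreSgpd C.lab hw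
    have hab := eval_mul' C hune hw hcu hcw ha hb hlink
    obtain ⟨mid, hmid, hmideval⟩ := C.K_onto (S.mul a b)
    obtain ⟨hmne, hcm⟩ := C.K_path mid hmid
    have huw : u ++ w ≠ [] := by simp [hune]
    have hcuw := chain_append' C hune hw hcu hcw hlink
    refine ⟨mid, ⟨hu, hmid, hlink, by rw [hab, hmideval]⟩, ⟨hmid, hv, ?_, ?_⟩⟩
    · have h1 := eval_tgt' C hmne hcm hmideval
      have h2 := eval_tgt' C huw hcuw hab
      have h3 : pathTgt? C.etgt (u ++ w) = some (C.esrc e) := by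
        rw [pathTgt?, List.getLast?_append]
        obtain ⟨d, hd⟩ : ∃ d, w.getLast? = some d :=
          ⟨_, List.getLast?_eq_getLast hw⟩
        rw [hd]
        show some (C.etgt d) = some (C.esrc e)
        rw [hlaste d hd]
      rw [h1, ← h2, h3]
    · rw [eval_append_singleton S.toPreSgpd C.lab hmne e, hmideval]
      rw [← List.append_assoc] at heval
      rw [eval_append_singleton S.toPreSgpd C.lab huw e, hab] at heval
      exact heval
  · rintro ⟨mid, ⟨hu, hmid, hlink, hevalw⟩, ⟨hmid', hv, hmtgt, hevale⟩⟩
    obtain ⟨hune, hcu⟩ := C.K_path u hu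
    obtain ⟨hmne, hcm⟩ := C.K_path mid hmid
    have huw : u ++ w ≠ [] := by simp [hune]
    refine ⟨hu, hv, by rw [hlink, hsrc], ?_⟩
    rw [← List.append_assoc, eval_append_singleton S.toPreSgpd C.lab huw e, hevalw]
    rw [eval_append_singleton S.toPreSgpd C.lab hmne e] at hevale
    exact hevale

theorem relWord_sync (hA : IsAutomaticStructure C) :
    ∀ w : List E, w ≠ [] → IsPathChain C.esrc C.etgt w →
      SyncRegular C.etgt (relWord C w) := by
  intro w
  induction w using List.reverseRecOn with
  | nil => intro h; exact absurd rfl h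
  | append_singleton w0 e ih =>
    intro _ hc
    rcases eq_or_ne w0 [] with rfl | hw0
    · rw [List.nil_append, relWord_singleton]
      exact hA.2.2.1 e
    · rw [relWord_snoc C hw0 hc]
      haveI : Finite E := hA.1
      have h1 : SyncRegular C.etgt (relWord C w0) := ih hw0 (List.isChain_append.1 hc).1
      have hne1 : ∀ p ∈ relWord C w0, p.1 ≠ [] ∧ p.2 ≠ [] := by
        rintro ⟨p1, p2⟩ ⟨h1', h2', _, _⟩
        exact ⟨(C.K_path _ h1').1, (C.K_path _ h2').1⟩
      exact sync_comp C.etgt h1 (hA.2.2.1 e) hne1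

end RelWord

section Transfer

variable {V E E' : Type} (etgt : E → V) (etgt' : E' → V) (ψ : E → E')

theorem delta_map (hψ : ∀ e, etgt' (ψ e) = etgt e) (a b : List E) :
    deltaPair etgt' (a.map ψ) (b.map ψ)
      = (deltaPair etgt a b).map
          (Prod.map (Sum.map ψ (id : Option V → Option V)) (Sum.map ψ id)) := by
  have hpadsym : ∀ l : List E,
      padSym etgt' (l.map ψ) = Sum.map ψ (id : Option V → Option V) (padSym etgt l) := by
    intro l
    rw [padSym, padSym, List.getLast?_map]
    cases l.getLast? with
    | none => rfl
    | some d =>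
      show Sum.inr (some (etgt' (ψ d))) = Sum.inr (some (etgt d))
      rw [hψ]
  have hpad : ∀ (l : List E) (n : ℕ),
      padded etgt' (l.map ψ) n = (padded etgt l n).map (Sum.map ψ id) := by
    intro l n
    rw [padded, padded, List.map_append, List.map_map, List.map_map,
      List.map_replicate, List.length_map, hpadsym]
    rfl
  rw [delta_eq, delta_eq, List.length_map, List.length_map, hpad, hpad, List.zip_map]

theorem sync_image {R : Set (List E × List E)} (hψ : ∀ e, etgt' (ψ e) = etgt e)
    (h : SyncRegular etgt R) :
    SyncRegular etgt' ((fun p : List E × List E => (p.1.map ψ, p.2.map ψ)) '' R) := by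
  have hset : {w | ∃ p ∈ (fun p : List E × List E => (p.1.map ψ, p.2.map ψ)) '' R,
      w = deltaPair etgt' p.1 p.2}
      = (List.map (Prod.map (Sum.map ψ (id : Option V → Option V)) (Sum.map ψ id))) ''
        {w | ∃ p ∈ R, w = deltaPair etgt p.1 p.2} := by
    ext w
    constructor
    · rintro ⟨p', ⟨⟨p1, p2⟩, hp, rfl⟩, rfl⟩
      exact ⟨deltaPair etgt p1 p2, ⟨(p1, p2), hp, rfl⟩,
        (delta_map etgt etgt' ψ hψ p1 p2).symm⟩
    · rintro ⟨w0, ⟨⟨p1, p2⟩, hp, rfl⟩, rfl⟩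
      exact ⟨(p1.map ψ, p2.map ψ), ⟨(p1, p2), hp, rfl⟩,
        (delta_map etgt etgt' ψ hψ p1 p2).symm⟩
  show IsRegularSet _
  rw [IsRegularSet]
  rw [show ({w | ∃ p ∈ (fun p : List E × List E => (p.1.map ψ, p.2.map ψ)) '' R,
      w = deltaPair etgt' p.1 p.2} : Set (List (Lett V E')))
    = (List.map (Prod.map (Sum.map ψ (id : Option V → Option V)) (Sum.map ψ id))) ''
        {w | ∃ p ∈ R, w = deltaPair etgt p.1 p.2} from hset]
  exact isRegular_image_map _ h

end Transfer


theorem eval_map_comp {O A E E' : Type} (S : PreSgpd O A) (lab : E → A) (lab' : E' → A)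
    (ψ : E → E') (hc : ∀ e, lab' (ψ e) = lab e) (l : List E) :
    evalPath? S lab' (l.map ψ) = evalPath? S lab l := by
  cases l with
  | nil => rfl
  | cons e t =>
    show some _ = some _
    congr 1
    rw [List.map_map, show lab' ∘ ψ = lab from funext hc, hc]

theorem pathTgt_map_comp {V E E' : Type} (etgt : E → V) (etgt' : E' → V) (ψ : E → E')
    (hc : ∀ e, etgt' (ψ e) = etgt e) (l : List E) :
    pathTgt? etgt' (l.map ψ) = pathTgt? etgt l := by
  rw [pathTgt?, pathTgt?, List.getLast?_map]
  cases l.getLast? with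
  | none => rfl
  | some d =>
    show some (etgt' (ψ d)) = some (etgt d)
    rw [hc]


/-- Proposition 3.2 (automatic cross-section case): a semigroupoid with an
automatic cross-section has one whose generators are distinctly labelled and
include representatives for any finite set `T` of arrows. -/
theorem stmt_1 {O A : Type} (S : Sgpd O A)
    (h : ∃ (E : Type) (C : ChoiceOfReps S.toPreSgpd E),
      IsAutomaticStructure C ∧ IsCrossSection C)
    (T : Set A) (hT : T.Finite) :
    ∃ (E : Type) (C : ChoiceOfReps S.toPreSgpd E),
      IsAutomaticStructure C ∧ IsCrossSection C ∧
      Function.Injective C.lab ∧ T ⊆ Set.range C.lab := by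
  classical
  obtain ⟨E, C, hA, hCS⟩ := h
  haveI hFE : Finite E := hA.1
  have hEfin : (Set.range C.lab ∪ T).Finite := (Set.finite_range C.lab).union hT
  let E' : Type := ↥(Set.range C.lab ∪ T)
  let ψ : E → E' := fun e => ⟨C.lab e, Or.inl ⟨e, rfl⟩⟩
  let C' : ChoiceOfReps S.toPreSgpd E' :=
    { esrc := fun a => S.src a.1
      etgt := fun a => S.tgt a.1
      lab := Subtype.val
      lab_src := fun _ => rfl
      lab_tgt := fun _ => rfl
      K := (List.map ψ) '' C.K
      K_path := by
        rintro l' ⟨l, hl, rfl⟩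
        obtain ⟨hne, hch⟩ := C.K_path l hl
        refine ⟨by simpa using hne, ?_⟩
        rw [IsPathChain]; unfold List.Chain'; rw [List.isChain_map]
        exact List.IsChain.imp (fun a b hh => by
          show S.tgt (C.lab a) = S.src (C.lab b)
          rw [C.lab_tgt, C.lab_src]; exact hh) hch
      K_onto := by
        intro a
        obtain ⟨l, hl, he⟩ := C.K_onto a
        exact ⟨l.map ψ, ⟨l, hl, rfl⟩,
          by rw [eval_map_comp S.toPreSgpd C.lab Subtype.val ψ (fun _ => rfl)]; exact he⟩ }
  have heval' : ∀ l : List E,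
      evalPath? S.toPreSgpd C'.lab (l.map ψ) = evalPath? S.toPreSgpd C.lab l :=
    eval_map_comp S.toPreSgpd C.lab C'.lab ψ (fun _ => rfl)
  have htgt'' : ∀ l : List E, pathTgt? C'.etgt (l.map ψ) = pathTgt? C.etgt l :=
    pathTgt_map_comp C.etgt C'.etgt ψ (fun e => C.lab_tgt e)
  have hψtgt : ∀ e, C'.etgt (ψ e) = C.etgt e := fun e => C.lab_tgt e
  refine ⟨E', C', ⟨hEfin.to_subtype, ?_, ?_, ?_⟩, ?_, ?_, ?_⟩
  · -- K' regular
    exact isRegular_image_map ψ hA.2.1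
  · -- relEdge
    intro a
    by_cases hmem : a.1 ∈ Set.range C.lab
    · obtain ⟨e0, he0⟩ := hmem
      have haψ : a = ψ e0 := Subtype.ext he0.symm
      have himg : relEdge C' a
          = (fun p : List E × List E => (p.1.map ψ, p.2.map ψ)) '' relEdge C e0 := by
        ext p
        constructor
        · intro hmem'
          obtain ⟨hu', hv', htc, hec⟩ := hmem'
          obtain ⟨u, hu, hequ⟩ := hu'
          obtain ⟨v, hv, heqv⟩ := hv'
          refine ⟨(u, v), ⟨hu, hv, ?_, ?_⟩, Prod.ext hequ heqv⟩
          · have h1 : pathTgt? C'.etgt p.1 = some (S.src a.1) := htc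
            rw [← hequ, htgt''] at h1
            rw [h1, ← he0, C.lab_src]
          · rw [← hequ, ← heqv, haψ] at hec
            rw [show List.map ψ u ++ [ψ e0] = List.map ψ (u ++ [e0]) from
              by rw [List.map_append]; rfl] at hec
            rw [heval', heval'] at hec
            exact hec
        · rintro ⟨⟨u, v⟩, ⟨hu, hv, htc, hec⟩, rfl⟩
          refine ⟨⟨u, hu, rfl⟩, ⟨v, hv, rfl⟩, ?_, ?_⟩
          · show pathTgt? C'.etgt (u.map ψ) = some (S.src a.1)
            rw [htgt'', htc, ← he0, C.lab_src]
          · show evalPath? S.toPreSgpd C'.lab (u.map ψ ++ [a])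
              = evalPath? S.toPreSgpd C'.lab (v.map ψ)
            rw [haψ, show List.map ψ u ++ [ψ e0] = List.map ψ (u ++ [e0]) from
              by rw [List.map_append]; rfl, heval', heval', hec]
      rw [himg]
      exact sync_image C.etgt C'.etgt ψ hψtgt (hA.2.2.1 e0)
    · have hmemT : a.1 ∈ T := a.2.resolve_left hmem
      obtain ⟨l, hl, hevl⟩ := C.K_onto a.1
      obtain ⟨hlne, hcl⟩ := C.K_path l hl
      have hsrc_l : pathSrc? C.esrc l = some (S.src a.1) := eval_src' C hlne hcl hevl
      have himg : relEdge C' a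
          = (fun p : List E × List E => (p.1.map ψ, p.2.map ψ)) '' relWord C l := by
        ext p
        constructor
        · intro hmem'
          obtain ⟨hu', hv', htc, hec⟩ := hmem'
          obtain ⟨u, hu, hequ⟩ := hu'
          obtain ⟨v, hv, heqv⟩ := hv'
          obtain ⟨hune, hcu⟩ := C.K_path u hu
          obtain ⟨au, hau⟩ := eval_isSome S.toPreSgpd C.lab hune
          have hlink : pathTgt? C.etgt u = pathSrc? C.esrc l := by
            have h1 : pathTgt? C'.etgt p.1 = some (S.src a.1) := htc
            rw [← hequ, htgt''] at h1
            rw [h1, hsrc_l]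
          have hmul := eval_mul' C hune hlne hcu hcl hau hevl hlink
          refine ⟨(u, v), ⟨hu, hv, hlink, ?_⟩, Prod.ext hequ heqv⟩
          rw [hmul]
          rw [← hequ, ← heqv] at hec
          rw [eval_append_singleton S.toPreSgpd C'.lab (by simpa using hune) a,
            heval', hau, Option.map_some, heval'] at hec
          exact hec
        · rintro ⟨⟨u, v⟩, ⟨hu, hv, hlink, hevuw⟩, rfl⟩
          obtain ⟨hune, hcu⟩ := C.K_path u hu
          obtain ⟨au, hau⟩ := eval_isSome S.toPreSgpd C.lab hune
          have hmul := eval_mul' C hune hlne hcu hcl hau hevl hlink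
          refine ⟨⟨u, hu, rfl⟩, ⟨v, hv, rfl⟩, ?_, ?_⟩
          · show pathTgt? C'.etgt (u.map ψ) = some (S.src a.1)
            rw [htgt'', hlink, hsrc_l]
          · show evalPath? S.toPreSgpd C'.lab (u.map ψ ++ [a])
              = evalPath? S.toPreSgpd C'.lab (v.map ψ)
            rw [eval_append_singleton S.toPreSgpd C'.lab (by simpa using hune) a,
              heval', hau, Option.map_some, heval', ← hevuw, hmul]
      rw [himg]
      exact sync_image C.etgt C'.etgt ψ hψtgt (relWord_sync C hA l hlne hcl)
  · -- relVertex
    intro v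
    have himg : relVertex C' v
        = (fun p : List E × List E => (p.1.map ψ, p.2.map ψ)) '' relVertex C v := by
      ext p
      constructor
      · intro hmem'
        obtain ⟨hu', hv', htc, hec⟩ := hmem'
        obtain ⟨u, hu, hequ⟩ := hu'
        obtain ⟨w, hw, heqw⟩ := hv'
        refine ⟨(u, w), ⟨hu, hw, ?_, ?_⟩, Prod.ext hequ heqw⟩
        · rw [← hequ, htgt''] at htc
          exact htc
        · rw [← hequ, ← heqw, heval', heval'] at hec
          exact hec
      · rintro ⟨⟨u, w⟩, ⟨hu, hw, htc, hec⟩, rfl⟩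
        refine ⟨⟨u, hu, rfl⟩, ⟨w, hw, rfl⟩, ?_, ?_⟩
        · show pathTgt? C'.etgt (u.map ψ) = some v
          rw [htgt'']
          exact htc
        · show evalPath? S.toPreSgpd C'.lab (u.map ψ)
            = evalPath? S.toPreSgpd C'.lab (w.map ψ)
          rw [heval', heval']
          exact hec
    rw [himg]
    exact sync_image C.etgt C'.etgt ψ hψtgt (hA.2.2.2 v)
  · -- cross-section
    rintro u' ⟨u, hu, rfl⟩ v' ⟨v, hv, rfl⟩ he
    rw [heval', heval'] at he
    rw [hCS u hu v hv he]
  · -- injective labels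
    exact fun x y hxy => Subtype.ext hxy
  · -- T in range
    intro t ht
    exact ⟨⟨t, Or.inr ht⟩, rfl⟩

end AutoRees
end

section
/- Let S be a semigroupoid which has a prefix-closed automatic structure, and let T be a finite subset of the arrows of S. Then S has a prefix-closed automatic structure (Y, L, sigma) such that the restriction of sigma to the edges of Y is injective and has image containing T. -/
/- Common framework: graphs, path languages, synchronous regularity,
   semigroupoids, automatic structures, and Rees matrix constructions. -/

namespace AutoRees

variable {O A E : Type} {S : PreSgpd O A}

section ChainShim

theorem _root_.List.chain'_nil {α : Type*} {R : α → α → Prop} : List.Chain' R [] :=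
  List.isChain_nil

theorem _root_.List.chain'_singleton {α : Type*} {R : α → α → Prop} (a : α) :
    List.Chain' R [a] :=
  List.isChain_singleton a

theorem _root_.List.chain'_cons {α : Type*} {R : α → α → Prop} {x y : α} {l : List α} :
    List.Chain' R (x :: y :: l) ↔ R x y ∧ List.Chain' R (y :: l) :=
  List.isChain_cons_cons

attribute [simp] List.chain'_nil List.chain'_singleton List.chain'_cons

theorem _root_.List.chain'_append {α : Type*} {R : α → α → Prop} {l₁ l₂ : List α} :
    List.Chain' R (l₁ ++ l₂) ↔ List.Chain' R l₁ ∧ List.Chain' R l₂ ∧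
      ∀ x ∈ l₁.getLast?, ∀ y ∈ l₂.head?, R x y :=
  List.isChain_append

theorem _root_.List.chain'_map {α β : Type*} {R : α → α → Prop} (f : β → α) {l : List β} :
    List.Chain' R (List.map f l) ↔ List.Chain' (fun a b : β => R (f a) (f b)) l :=
  List.isChain_map f

theorem _root_.List.Chain'.imp {α : Type*} {R S : α → α → Prop}
    (H : ∀ a b, R a b → S a b) {l : List α} (p : List.Chain' R l) : List.Chain' S l :=
  List.IsChain.imp (fun a b h => H a b h) p

theorem _root_.List.chain'_iff_get {α : Type*} {R : α → α → Prop} {l : List α} :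
    List.Chain' R l ↔ ∀ (i : ℕ) (h : i < l.length - 1),
      R (l.get ⟨i, by omega⟩) (l.get ⟨i + 1, by omega⟩) :=
  ⟨fun h i hi => (List.isChain_iff_getElem.mp h) i (by omega),
    fun h => List.isChain_iff_getElem.mpr fun i hi => h i (by omega)⟩

end ChainShim


/-! ### Auxiliary automata lemmas -/

section Automata

open List

variable {α : Type} {β : Type}

theorem aux_isRegularSet_inter {L₁ L₂ : Set (List α)} (h₁ : IsRegularSet L₁)
    (h₂ : IsRegularSet L₂) : IsRegularSet (L₁ ∩ L₂) := by
  obtain ⟨σ₁, i₁, M₁, hM₁⟩ := h₁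
  obtain ⟨σ₂, i₂, M₂, hM₂⟩ := h₂
  refine ⟨σ₁ × σ₂, inferInstance,
    ⟨fun q a => (M₁.step q.1 a, M₂.step q.2 a), (M₁.start, M₂.start),
      {q | q.1 ∈ M₁.accept ∧ q.2 ∈ M₂.accept}⟩, ?_⟩
  set M : DFA α (σ₁ × σ₂) :=
    ⟨fun q a => (M₁.step q.1 a, M₂.step q.2 a), (M₁.start, M₂.start),
      {q | q.1 ∈ M₁.accept ∧ q.2 ∈ M₂.accept}⟩ with hMdef
  have key : ∀ (w : List α) (q₁ : σ₁) (q₂ : σ₂),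
      M.evalFrom (q₁, q₂) w = (M₁.evalFrom q₁ w, M₂.evalFrom q₂ w) := by
    intro w
    induction w with
    | nil => intro q₁ q₂; rfl
    | cons a t ih => intro q₁ q₂; simp only [DFA.evalFrom, List.foldl_cons] at *; exact ih _ _
  ext w
  have : w ∈ M.accepts ↔ w ∈ M₁.accepts ∧ w ∈ M₂.accepts := by
    rw [DFA.mem_accepts, DFA.mem_accepts, DFA.mem_accepts]
    show M.evalFrom (M₁.start, M₂.start) w ∈ M.accept ↔ _
    rw [key]
    rfl
  rw [this, hM₁, hM₂]
  exact Iff.rfl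

/-- NFA for the letterwise image of a regular language. -/
theorem aux_isRegularSet_image (f : α → β) {L : Set (List α)} (h : IsRegularSet L) :
    IsRegularSet (List.map f '' L) := by
  obtain ⟨σ, iσ, M, hM⟩ := h
  classical
  set N : NFA β σ :=
    ⟨fun q b => {q' | ∃ a, f a = b ∧ M.step q a = q'}, {M.start}, M.accept⟩ with hNdef
  have key : ∀ (w : List β) (S : Set σ) (q : σ),
      q ∈ N.evalFrom S w ↔ ∃ s ∈ S, ∃ y, List.map f y = w ∧ M.evalFrom s y = q := by
    intro w
    induction w with
    | nil =>
      intro S q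
      simp only [NFA.evalFrom, List.foldl_nil]
      constructor
      · intro hq; exact ⟨q, hq, [], rfl, rfl⟩
      · rintro ⟨s, hs, y, hy, he⟩
        have hy0 : y = [] := by
          cases y with
          | nil => rfl
          | cons a t => simp at hy
        subst hy0
        have : s = q := he
        subst this
        exact hs
    | cons b t ih =>
      intro S q
      simp only [NFA.evalFrom, List.foldl_cons]
      rw [show List.foldl N.stepSet (N.stepSet S b) t = N.evalFrom (N.stepSet S b) t from rfl,
        ih]
      constructor
      · rintro ⟨s', hs', y, hy, he⟩
        obtain ⟨s, hsS, hstep⟩ : ∃ s ∈ S, s' ∈ N.step s b := by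
          simpa [NFA.stepSet] using hs'
        obtain ⟨a, hab, hsa⟩ := hstep
        exact ⟨s, hsS, a :: y, by simp [hab, hy], by
          simp only [DFA.evalFrom, List.foldl_cons]; rw [hsa]; exact he⟩
      · rintro ⟨s, hsS, y, hy, he⟩
        cases y with
        | nil => simp at hy
        | cons a y' =>
          simp only [List.map_cons, List.cons.injEq] at hy
          refine ⟨M.step s a, ?_, y', hy.2, ?_⟩
          · simp only [NFA.stepSet, Set.mem_iUnion]
            exact ⟨s, hsS, a, hy.1, rfl⟩
          · exact he
  refine ⟨Set σ, inferInstance, N.toDFA, ?_⟩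
  rw [NFA.toDFA_correct]
  ext w
  show w ∈ N.accepts ↔ _
  rw [NFA.mem_accepts]
  constructor
  · rintro ⟨q, hq, hmem⟩
    rw [key] at hmem
    obtain ⟨s, hs, y, hy, he⟩ := hmem
    have hs' : s = M.start := by simpa [hNdef] using hs
    subst hs'
    refine ⟨y, ?_, hy⟩
    have : y ∈ M.accepts := by
      rw [DFA.mem_accepts]
      show M.evalFrom M.start y ∈ M.accept
      rw [he]
      exact hq
    rwa [hM] at this
  · rintro ⟨y, hyL, hy⟩
    have : y ∈ M.accepts := by rw [hM]; exact hyL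
    rw [DFA.mem_accepts] at this
    exact ⟨M.eval y, this, by rw [key]; exact ⟨M.start, by simp [hNdef], y, hy, rfl⟩⟩

theorem aux_isRegularSet_rightQuot {P : Set (List α)} (h : IsRegularSet P)
    (D : Set (List α)) : IsRegularSet {y | ∃ d ∈ D, y ++ d ∈ P} := by
  obtain ⟨σ, iσ, M, hM⟩ := h
  refine ⟨σ, iσ, ⟨M.step, M.start, {q | ∃ d ∈ D, M.evalFrom q d ∈ M.accept}⟩, ?_⟩
  ext y
  show (∃ d ∈ D, M.evalFrom (M.evalFrom M.start y) d ∈ M.accept) ↔ _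
  constructor
  · rintro ⟨d, hd, hacc⟩
    refine ⟨d, hd, ?_⟩
    have : y ++ d ∈ M.accepts := by
      rw [DFA.mem_accepts]
      show M.evalFrom M.start (y ++ d) ∈ M.accept
      rw [M.evalFrom_of_append]
      exact hacc
    rwa [hM] at this
  · rintro ⟨d, hd, hmem⟩
    refine ⟨d, hd, ?_⟩
    have h2 : y ++ d ∈ M.accepts := by rw [hM]; exact hmem
    have h3 : M.evalFrom M.start (y ++ d) ∈ M.accept := h2
    rwa [M.evalFrom_of_append] at h3

theorem aux_isRegularSet_lastPred (P : α → Prop) :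
    IsRegularSet {w : List α | ∃ b ∈ w.getLast?, P b} := by
  classical
  set M : DFA α (Option Bool) :=
    ⟨fun _ a => some (decide (P a)), none, {some true}⟩ with hMdef
  have key : ∀ (w : List α) (hw : w ≠ []) (q : Option Bool),
      M.evalFrom q w = some (decide (P (w.getLast hw))) := by
    intro w
    induction w with
    | nil => intro hw; exact absurd rfl hw
    | cons a t ih =>
      intro hw q
      cases t with
      | nil => rfl
      | cons b t' =>
        show M.evalFrom (some (decide (P a))) (b :: t') = _
        rw [ih (by simp)]
        congr 1
  refine ⟨Option Bool, inferInstance, M, ?_⟩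
  ext w
  rw [DFA.mem_accepts]
  cases hw : w.getLast? with
  | none =>
    have : w = [] := by simpa using hw
    subst this
    simp only [DFA.eval, DFA.evalFrom_nil]
    constructor
    · intro hmem
      exact absurd hmem (by simp [hMdef])
    · rintro ⟨b, hb, -⟩
      simp at hb
  | some b =>
    have hwne : w ≠ [] := by rintro rfl; simp at hw
    have hb : w.getLast hwne = b := by
      have h2 := List.getLast?_eq_getLast hwne
      rw [hw] at h2
      exact (Option.some_inj.mp h2).symm
    show M.evalFrom M.start w ∈ M.accept ↔ _
    rw [key w hwne, hb]
    constructor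
    · intro hmem
      have : decide (P b) = true := by simpa [hMdef] using hmem
      exact ⟨b, hw, by simpa using this⟩
    · rintro ⟨b', hb', hPb⟩
      rw [hw] at hb'
      cases hb'
      simp [hMdef, hPb]

end Automata

section Automata2

open List

variable {α : Type} {γ : Type} {δ : Type}

theorem aux_isRegularSet_chain (S : Set α) (hS : S.Finite) (Q0 R : α → Prop)
    (Ok : α → α → Prop) (hQ : ∀ a, Q0 a → a ∈ S) (hOk : ∀ a b, a ∈ S → Ok a b → b ∈ S) :
    IsRegularSet {w : List α |
      (∃ a ∈ w.head?, Q0 a) ∧ w.Chain' Ok ∧ ∃ b ∈ w.getLast?, R b} := by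
  classical
  haveI : Fintype ↥S := hS.fintype
  set M : DFA α (Option (Option ↥S)) :=
    ⟨fun q x =>
      match q with
      | none => none
      | some none => if h : Q0 x then some (some ⟨x, hQ x h⟩) else none
      | some (some a) => if h : Ok a.1 x then some (some ⟨x, hOk a.1 x a.2 h⟩) else none,
      some none,
      {q | ∃ a : ↥S, q = some (some a) ∧ R a.1}⟩ with hMdef
  have hnone : ∀ w : List α, M.evalFrom none w = none := by
    intro w
    induction w with
    | nil => rfl
    | cons x t ih => exact ih
  have key : ∀ (w : List α) (a : α) (ha : a ∈ S),
      (M.evalFrom (some (some ⟨a, ha⟩)) w ∈ M.accept ↔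
        List.Chain' Ok (a :: w) ∧ ∃ b ∈ (a :: w).getLast?, R b) := by
    intro w
    induction w with
    | nil =>
      intro a ha
      simp only [DFA.evalFrom_nil, List.chain'_singleton, true_and]
      constructor
      · rintro ⟨a', ha', hR⟩
        have h3 : a' = (⟨a, ha⟩ : ↥S) := by simpa using ha'.symm
        subst h3
        exact ⟨a, by simp, hR⟩
      · rintro ⟨b, hb, hR⟩
        have : b = a := by simpa using hb.symm
        subst this
        exact ⟨⟨b, ha⟩, rfl, hR⟩
    | cons x t ih =>
      intro a ha
      show M.evalFrom (M.step (some (some ⟨a, ha⟩)) x) t ∈ M.accept ↔ _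
      by_cases h : Ok a x
      · have hstep : M.step (some (some ⟨a, ha⟩)) x = some (some ⟨x, hOk a x ha h⟩) := by
          simp [hMdef, h]
        rw [hstep, ih x (hOk a x ha h)]
        rw [List.chain'_cons]
        constructor
        · rintro ⟨hc, hb⟩
          exact ⟨⟨h, hc⟩, by simpa using hb⟩
        · rintro ⟨⟨-, hc⟩, hb⟩
          exact ⟨hc, by simpa using hb⟩
      · have hstep : M.step (some (some ⟨a, ha⟩)) x = none := by simp [hMdef, h]
        rw [hstep, hnone]
        constructor
        · rintro ⟨a', ha', -⟩; simp at ha'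
        · rintro ⟨hc, -⟩
          rw [List.chain'_cons] at hc
          exact absurd hc.1 h
  refine ⟨Option (Option ↥S), inferInstance, M, ?_⟩
  ext w
  rw [DFA.mem_accepts]
  cases w with
  | nil =>
    simp only [DFA.eval, DFA.evalFrom_nil]
    constructor
    · rintro ⟨a', ha', -⟩; simp [hMdef] at ha'
    · rintro ⟨⟨a, ha, -⟩, -⟩; simp at ha
  | cons x t =>
    show M.evalFrom (M.step (some none) x) t ∈ M.accept ↔ _
    by_cases h : Q0 x
    · have hstep : M.step (some none) x = some (some ⟨x, hQ x h⟩) := by simp [hMdef, h]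
      rw [hstep, key t x (hQ x h)]
      constructor
      · rintro ⟨hc, hb⟩
        exact ⟨⟨x, by simp, h⟩, hc, hb⟩
      · rintro ⟨-, hc, hb⟩
        exact ⟨hc, hb⟩
    · have hstep : M.step (some none) x = none := by simp [hMdef, h]
      rw [hstep, hnone]
      constructor
      · rintro ⟨a', ha', -⟩; simp at ha'
      · rintro ⟨⟨a, ha, hQa⟩, -⟩
        have : a = x := by simpa using ha.symm
        subst this
        exact absurd hQa h
end Automata2

section Freeze

open List

variable {γ δ : Type} {σ : Type}

/-- A DFA that runs `M` on the `pr`-projection of its input until the first column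
satisfying `P` appears, then freezes. -/
def freezeDFA (M : DFA γ σ) (pr : δ → γ) (P : δ → Prop) [DecidablePred P] :
    DFA δ (σ × Bool) where
  step := fun q x =>
    if q.2 then q else if P x then (q.1, true) else (M.step q.1 (pr x), false)
  start := (M.start, false)
  accept := {q | q.1 ∈ M.accept}

theorem freezeDFA_frozen (M : DFA γ σ) (pr : δ → γ) (P : δ → Prop) [DecidablePred P]
    (q : σ) (w : List δ) : (freezeDFA M pr P).evalFrom (q, true) w = (q, true) := by
  induction w with
  | nil => rfl
  | cons x t ih =>
    show (freezeDFA M pr P).evalFrom ((freezeDFA M pr P).step (q, true) x) t = _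
    have : (freezeDFA M pr P).step (q, true) x = (q, true) := by simp [freezeDFA]
    rw [this, ih]

theorem freezeDFA_live (M : DFA γ σ) (pr : δ → γ) (P : δ → Prop) [DecidablePred P]
    (q : σ) (w : List δ) (hw : ∀ x ∈ w, ¬ P x) :
    (freezeDFA M pr P).evalFrom (q, false) w = (M.evalFrom q (w.map pr), false) := by
  induction w generalizing q with
  | nil => rfl
  | cons x t ih =>
    show (freezeDFA M pr P).evalFrom ((freezeDFA M pr P).step (q, false) x) t = _
    have hx : ¬ P x := hw x (by simp)
    have : (freezeDFA M pr P).step (q, false) x = (M.step q (pr x), false) := by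
      simp [freezeDFA, hx]
    rw [this, ih _ (fun y hy => hw y (by simp [hy]))]
    rfl

theorem freezeDFA_eval (M : DFA γ σ) (pr : δ → γ) (P : δ → Prop) [DecidablePred P]
    (w₁ w₂ : List δ) (h₁ : ∀ x ∈ w₁, ¬ P x) (h₂ : ∀ x ∈ w₂, P x) :
    ((w₁ ++ w₂) ∈ (freezeDFA M pr P).accepts ↔ (w₁.map pr) ∈ M.accepts) := by
  rw [DFA.mem_accepts, DFA.mem_accepts]
  show (freezeDFA M pr P).evalFrom (M.start, false) (w₁ ++ w₂) ∈ _ ↔ _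
  rw [DFA.evalFrom_of_append, freezeDFA_live M pr P _ _ h₁]
  cases w₂ with
  | nil => exact Iff.rfl
  | cons x t =>
    show (freezeDFA M pr P).evalFrom
      ((freezeDFA M pr P).step (M.evalFrom M.start (w₁.map pr), false) x) t ∈ _ ↔ _
    have hx : P x := h₂ x (by simp)
    have : (freezeDFA M pr P).step (M.evalFrom M.start (w₁.map pr), false) x =
        (M.evalFrom M.start (w₁.map pr), true) := by simp [freezeDFA, hx]
    rw [this, freezeDFA_frozen]
    exact Iff.rfl

end Freeze

section Tracks

open List

variable {V E : Type} (etgt : E → V)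

theorem aux_padSym_isRight (l : List E) : (padSym etgt l).isRight = true := rfl

/-- The padded track of a path, of total length `m`. -/
def trkP (l : List E) (m : ℕ) : List (E ⊕ Option V) :=
  l.map Sum.inl ++ List.replicate (m - l.length) (padSym etgt l)

theorem aux_length_trkP {l : List E} {m : ℕ} (h : l.length ≤ m) :
    (trkP etgt l m).length = m := by
  simp [trkP]
  omega

theorem aux_zip_take {A B : Type} : ∀ (l₁ : List A) (l₂ : List B),
    l₁.zip (l₂.take l₁.length) = l₁.zip l₂ := by
  intro l₁
  induction l₁ with
  | nil => intro l₂; simp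
  | cons a t ih =>
    intro l₂
    cases l₂ with
    | nil => simp
    | cons b t₂ => simp [List.zip_cons_cons, ih]

theorem aux_take_zip {A B : Type} : ∀ (l₁ : List A) (l₂ : List B),
    (l₁.take l₂.length).zip l₂ = l₁.zip l₂ := by
  intro l₁
  induction l₁ with
  | nil => intro l₂; simp
  | cons a t ih =>
    intro l₂
    cases l₂ with
    | nil => simp
    | cons b t₂ => simp [List.zip_cons_cons, ih]

theorem aux_zip_replicate_left {A B : Type} (c : A) : ∀ (l : List B),
    (List.replicate l.length c).zip l = l.map (fun y => (c, y)) := by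
  intro l
  induction l with
  | nil => simp
  | cons b t ih => simp [List.replicate_succ, List.zip_cons_cons, ih]

theorem aux_zip_replicate_right {A B : Type} (c : B) : ∀ (l : List A),
    l.zip (List.replicate l.length c) = l.map (fun x => (x, c)) := by
  intro l
  induction l with
  | nil => simp
  | cons b t ih => simp [List.replicate_succ, List.zip_cons_cons, ih]

theorem aux_trkP_zip (u v : List E) {m : ℕ} (hm : max u.length v.length ≤ m) :
    (trkP etgt u m).zip (trkP etgt v m) =
      deltaPair etgt u v ++
        List.replicate (m - max u.length v.length) (padSym etgt u, padSym etgt v) := by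
  have hum : u.length ≤ m := le_trans (le_max_left _ _) hm
  have hvm : v.length ≤ m := le_trans (le_max_right _ _) hm
  by_cases h : u.length ≤ v.length
  · have hmax : max u.length v.length = v.length := max_eq_right h
    have hv : trkP etgt v m =
        ((v.take u.length).map Sum.inl) ++
          (((v.drop u.length).map Sum.inl) ++
            List.replicate (m - v.length) (padSym etgt v)) := by
      unfold trkP
      rw [← List.append_assoc, ← List.map_append, List.take_append_drop]
    rw [hv,
      show trkP etgt u m = (u.map (Sum.inl : E → E ⊕ Option V)) ++
        List.replicate (m - u.length) (padSym etgt u) from rfl,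
      List.zip_append (by simp [List.length_take]; omega)]
    have h1 : (u.map (Sum.inl : E → E ⊕ Option V)).zip
          ((v.take u.length).map (Sum.inl : E → E ⊕ Option V)) =
        (u.map Sum.inl).zip (v.map Sum.inl) := by
      rw [List.map_take]
      have h0 : u.length = (u.map (Sum.inl : E → E ⊕ Option V)).length := by simp
      rw [h0, aux_zip_take]
    have hlen2 : m - u.length =
        (((v.drop u.length).map Sum.inl) ++
          List.replicate (m - v.length) (padSym etgt v)).length := by
      simp
      omega
    have h2 : (List.replicate (m - u.length) (padSym etgt u)).zip
        (((v.drop u.length).map Sum.inl) ++ List.replicate (m - v.length) (padSym etgt v)) =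
        ((v.drop u.length).map (fun e => (padSym etgt u, Sum.inl e))) ++
          List.replicate (m - v.length) (padSym etgt u, padSym etgt v) := by
      rw [hlen2, aux_zip_replicate_left, List.map_append, List.map_map, map_replicate]
      rfl
    rw [h1, h2]
    show _ = (deltaPair etgt u v) ++ _
    unfold deltaPair
    rw [if_pos h, hmax, List.append_assoc]
  · have h' : v.length ≤ u.length := le_of_not_ge h
    have hmax : max u.length v.length = u.length := max_eq_left h'
    have hu : trkP etgt u m =
        ((u.take v.length).map Sum.inl) ++
          (((u.drop v.length).map Sum.inl) ++
            List.replicate (m - u.length) (padSym etgt u)) := by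
      unfold trkP
      rw [← List.append_assoc, ← List.map_append, List.take_append_drop]
    rw [hu,
      show trkP etgt v m = (v.map (Sum.inl : E → E ⊕ Option V)) ++
        List.replicate (m - v.length) (padSym etgt v) from rfl,
      List.zip_append (by simp [List.length_take]; omega)]
    have h1 : ((u.take v.length).map (Sum.inl : E → E ⊕ Option V)).zip
          (v.map (Sum.inl : E → E ⊕ Option V)) =
        (u.map Sum.inl).zip (v.map Sum.inl) := by
      rw [List.map_take]
      have h0 : v.length = (v.map (Sum.inl : E → E ⊕ Option V)).length := by simp
      rw [h0, aux_take_zip]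
    have hlen2 : m - v.length =
        (((u.drop v.length).map Sum.inl) ++
          List.replicate (m - u.length) (padSym etgt u)).length := by
      simp
      omega
    have h2 : (((u.drop v.length).map Sum.inl) ++
          List.replicate (m - u.length) (padSym etgt u)).zip
          (List.replicate (m - v.length) (padSym etgt v)) =
        ((u.drop v.length).map (fun e => (Sum.inl e, padSym etgt v))) ++
          List.replicate (m - u.length) (padSym etgt u, padSym etgt v) := by
      rw [hlen2, aux_zip_replicate_right, List.map_append, List.map_map, map_replicate]
      rfl
    rw [h1, h2]
    show _ = (deltaPair etgt u v) ++ _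
    unfold deltaPair
    rw [if_neg h, hmax, List.append_assoc]

theorem aux_deltaPair_eq_zip (u v : List E) :
    deltaPair etgt u v =
      (trkP etgt u (max u.length v.length)).zip (trkP etgt v (max u.length v.length)) := by
  rw [aux_trkP_zip etgt u v (le_refl _)]
  simp

theorem aux_length_deltaPair (u v : List E) :
    (deltaPair etgt u v).length = max u.length v.length := by
  rw [aux_deltaPair_eq_zip, List.length_zip,
    aux_length_trkP etgt (le_max_left _ _), aux_length_trkP etgt (le_max_right _ _)]
  simp

theorem aux_deltaPair_ne_nil {u : List E} (v : List E) (hu : u ≠ []) :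
    deltaPair etgt u v ≠ [] := by
  have : (deltaPair etgt u v).length ≠ 0 := by
    rw [aux_length_deltaPair]
    have := List.length_pos_iff.mpr hu
    omega
  intro hc
  rw [hc] at this
  simp at this

theorem aux_deltaPair_cols {u v : List E} {c : (E ⊕ Option V) × (E ⊕ Option V)}
    (hc : c ∈ deltaPair etgt u v) : c.1.isLeft = true ∨ c.2.isLeft = true := by
  unfold deltaPair at hc
  rcases List.mem_append.mp hc with h | h
  · obtain ⟨h1, -⟩ := List.of_mem_zip h
    obtain ⟨e, -, he⟩ := List.mem_map.mp h1
    left; rw [← he]; rfl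
  · split at h
    · obtain ⟨e, -, he⟩ := List.mem_map.mp h
      right; rw [← he]; rfl
    · obtain ⟨e, -, he⟩ := List.mem_map.mp h
      left; rw [← he]; rfl

theorem aux_deltaPair_getLast {u v : List E} (hu : u ≠ []) :
    ∃ b ∈ (deltaPair etgt u v).getLast?,
      (b.1.isLeft = true ∨ b.2.isLeft = true) := by
  have hne := aux_deltaPair_ne_nil etgt v hu
  refine ⟨(deltaPair etgt u v).getLast hne, ?_, ?_⟩
  · exact List.getLast?_eq_getLast hne
  · exact aux_deltaPair_cols etgt (List.getLast_mem hne)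

/-- Decoding a padded track. -/
def decodeTrk (t : List (E ⊕ Option V)) : List E :=
  (t.takeWhile Sum.isLeft).filterMap Sum.getLeft?

theorem aux_decodeTrk_trkP (l : List E) (m : ℕ) : decodeTrk (trkP etgt l m) = l := by
  unfold decodeTrk trkP
  have h1 : (List.map Sum.inl l).takeWhile (Sum.isLeft (β := Option V)) = List.map Sum.inl l := by
    induction l with
    | nil => rfl
    | cons a t ih => rw [List.map_cons, List.takeWhile_cons]; simp [ih]
  rw [List.takeWhile_append, if_pos (by rw [h1])]
  have h2 : (List.replicate (m - l.length) (padSym etgt l)).takeWhile Sum.isLeft = [] := by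
    cases hk : m - l.length with
    | zero => rfl
    | succ k => rw [List.replicate_succ, List.takeWhile_cons]; simp [padSym]
  rw [h2, List.append_nil, List.filterMap_map]
  have : (Sum.getLeft? ∘ (Sum.inl : E → E ⊕ Option V)) = some := by
    funext e; rfl
  rw [this, List.filterMap_some]

theorem aux_map_fst_deltaPair (u v : List E) :
    (deltaPair etgt u v).map Prod.fst = trkP etgt u (max u.length v.length) := by
  rw [aux_deltaPair_eq_zip]
  exact List.map_fst_zip (by
    rw [aux_length_trkP etgt (le_max_left _ _), aux_length_trkP etgt (le_max_right _ _)])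

theorem aux_map_snd_deltaPair (u v : List E) :
    (deltaPair etgt u v).map Prod.snd = trkP etgt v (max u.length v.length) := by
  rw [aux_deltaPair_eq_zip]
  exact List.map_snd_zip (by
    rw [aux_length_trkP etgt (le_max_left _ _), aux_length_trkP etgt (le_max_right _ _)])

theorem aux_deltaPair_inj {u v u' v' : List E}
    (h : deltaPair etgt u v = deltaPair etgt u' v') : u = u' ∧ v = v' := by
  constructor
  · have h1 := congrArg (fun l => decodeTrk (List.map Prod.fst l)) h
    simpa [aux_map_fst_deltaPair, aux_decodeTrk_trkP] using h1
  · have h1 := congrArg (fun l => decodeTrk (List.map Prod.snd l)) h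
    simpa [aux_map_snd_deltaPair, aux_decodeTrk_trkP] using h1

theorem aux_match_split {A : Type} (P : A → Prop) {y d a b : List A} (h : y ++ d = a ++ b)
    (hy : ∃ c ∈ y.getLast?, ¬ P c) (hd : ∀ x ∈ d, P x) (hA : ∀ x ∈ a, ¬ P x)
    (hB : ∀ x ∈ b, P x) : y = a ∧ d = b := by
  obtain ⟨c, hc, hcP⟩ := hy
  have hyne : y ≠ [] := by rintro rfl; simp at hc
  have hlen : y.length + d.length = a.length + b.length := by
    have := congrArg List.length h; simpa using this
  have hYA : y.length = a.length := by
    rcases lt_trichotomy y.length a.length with hlt | heq | hgt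
    · exfalso
      have hdne : d ≠ [] := by
        rintro rfl
        simp at hlen
        omega
      have hd0 : 0 < d.length := List.length_pos_iff.mpr hdne
      have hidx : y.length < (y ++ d).length := by simp; omega
      have e1 : (y ++ d)[y.length]'hidx = d[0]'hd0 := by
        rw [List.getElem_append_right (le_refl _)]
        simp
      have e2 : (y ++ d)[y.length]'hidx = a[y.length]'hlt := by
        rw [List.getElem_of_eq h]
        exact List.getElem_append_left hlt
      have e3 : a[y.length]'hlt = d[0]'hd0 := e2.symm.trans e1
      exact hA _ (List.getElem_mem hlt) (by rw [e3]; exact hd _ (List.getElem_mem hd0))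
    · exact heq
    · exfalso
      have hy0 : 0 < y.length := List.length_pos_iff.mpr hyne
      have hidx : y.length - 1 < (y ++ d).length := by simp; omega
      have hylt : y.length - 1 < y.length := by omega
      have e1 : (y ++ d)[y.length - 1]'hidx = y[y.length - 1]'hylt :=
        List.getElem_append_left hylt
      have hcc : y[y.length - 1]'hylt = c := by
        have h2 := List.getLast?_eq_getLast hyne
        rw [hc] at h2
        have h3 := Option.some_inj.mp h2
        rw [h3, List.getLast_eq_getElem]
      have hbidx : y.length - 1 - a.length < b.length := by omega
      have e2 : (y ++ d)[y.length - 1]'hidx = b[y.length - 1 - a.length]'hbidx := by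
        rw [List.getElem_of_eq h]
        exact List.getElem_append_right (by omega)
      have e3 : c = b[y.length - 1 - a.length]'hbidx := by
        rw [← hcc, ← e1, e2]
      exact hcP (by rw [e3]; exact hB _ (List.getElem_mem hbidx))
  exact List.append_inj h hYA

end Tracks

section Conv3

open List

variable {V E : Type} (etgt : E → V)

/-- Compatibility of consecutive letters within one padded track. -/
def okT : (E ⊕ Option V) → (E ⊕ Option V) → Prop
  | Sum.inl _, Sum.inl _ => True
  | Sum.inl e, Sum.inr o => o = some (etgt e)
  | Sum.inr o, Sum.inr o' => o' = o
  | Sum.inr _, Sum.inl _ => False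

theorem aux_chain'_map_inl : ∀ l : List E, List.Chain' (okT etgt) (l.map Sum.inl) := by
  intro l
  induction l with
  | nil => simp
  | cons a t ih =>
    cases t with
    | nil => simp
    | cons b t' =>
      rw [List.map_cons, List.map_cons, List.chain'_cons]
      rw [List.map_cons] at ih
      exact ⟨trivial, ih⟩

theorem aux_chain'_replicate (k : ℕ) (o : Option V) :
    List.Chain' (okT etgt) (List.replicate k (Sum.inr o : E ⊕ Option V)) := by
  induction k with
  | zero => simp
  | succ n ih =>
    cases n with
    | zero => simp
    | succ n' =>
      rw [List.replicate_succ, List.replicate_succ, List.chain'_cons]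
      rw [List.replicate_succ] at ih
      exact ⟨rfl, ih⟩

theorem aux_chain'_trkP (l : List E) (m : ℕ) : List.Chain' (okT etgt) (trkP etgt l m) := by
  unfold trkP
  rw [List.chain'_append]
  refine ⟨aux_chain'_map_inl etgt l, ?_, ?_⟩
  · show List.Chain' (okT etgt) (List.replicate _ (padSym etgt l))
    exact aux_chain'_replicate etgt _ _
  · intro x hx y hy
    rw [List.getLast?_map] at hx
    cases hl : l.getLast? with
    | none => rw [hl] at hx; simp at hx
    | some e =>
      rw [hl] at hx
      simp only [Option.map_some] at hx
      have hx' : x = Sum.inl e := by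
        have := Option.mem_def.mp hx
        exact (Option.some_inj.mp this.symm)
      cases hk : m - l.length with
      | zero => rw [hk] at hy; simp at hy
      | succ k =>
        rw [hk, List.replicate_succ] at hy
        simp only [List.head?_cons] at hy
        have hy' : y = padSym etgt l := Option.some_inj.mp (Option.mem_def.mp hy).symm
        rw [hx', hy']
        show okT etgt (Sum.inl e) (Sum.inr (l.getLast?.map etgt))
        show l.getLast?.map etgt = some (etgt e)
        rw [hl]
        rfl

/-- If a track is non-empty, starts with a letter, and is consecutively compatible,
then it is a padded track. -/
theorem aux_track_decomp :
    ∀ t : List (E ⊕ Option V), (∃ e, t.head? = some (Sum.inl e)) →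
      List.Chain' (okT etgt) t →
      ∃ l : List E, l ≠ [] ∧ l.length ≤ t.length ∧ t = trkP etgt l t.length ∧
        (∀ x, t.getLast? = some x → x.isLeft = true → t.length = l.length) := by
  intro t
  induction t using List.reverseRecOn with
  | nil => rintro ⟨e, he⟩; simp at he
  | append_singleton s x ih =>
    rintro ⟨e, he⟩ hchain
    by_cases hsnil : s = []
    · subst hsnil
      simp only [List.nil_append, List.head?_cons] at he
      have hx : x = Sum.inl e := Option.some_inj.mp he.symm |>.symm
      subst hx
      refine ⟨[e], by simp, by simp, ?_, ?_⟩
      · simp [trkP]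
      · intro y hy hleft; simp
    · have hsne : s ≠ [] := hsnil
      have hchain' : List.Chain' (okT etgt) s := (List.chain'_append.mp hchain).1
      have hhead : ∃ e', s.head? = some (Sum.inl e') := by
        refine ⟨e, ?_⟩
        cases s with
        | nil => exact absurd rfl hsne
        | cons a s' =>
          rw [List.cons_append, List.head?_cons] at he
          simpa using he
      obtain ⟨l, hlne, hlle, hdec, hlast⟩ := ih hhead hchain'
      have hjun : okT etgt (s.getLast hsne) x := by
        have := (List.chain'_append.mp hchain).2.2
        exact this _ (List.getLast?_eq_getLast hsne) x rfl
      cases x with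
      | inl f =>
        have hlg : (s.getLast hsne).isLeft = true := by
          cases hg : s.getLast hsne with
          | inl e' => rfl
          | inr o =>
            rw [hg] at hjun
            exact hjun.elim
        have hlen : s.length = l.length :=
          hlast _ (List.getLast?_eq_getLast hsne) hlg
        have hsm : s = l.map Sum.inl := by
          rw [hdec]; unfold trkP; rw [hlen]; simp
        refine ⟨l ++ [f], by simp, by simp [hlen], ?_, ?_⟩
        · unfold trkP
          rw [hsm]
          simp [hlen]
        · intro y hy hleft
          simp [hlen]
      | inr o =>
        cases hg : s.getLast hsne with
        | inl e' =>
          have hlen : s.length = l.length :=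
            hlast _ (List.getLast?_eq_getLast hsne) (by rw [hg]; rfl)
          have hsm : s = l.map Sum.inl := by
            rw [hdec]; unfold trkP; rw [hlen]; simp
          have hjun' : okT etgt (Sum.inl e') (Sum.inr o) := by rw [← hg]; exact hjun
          have ho : o = some (etgt e') := hjun'
          have hle' : l.getLast? = some e' := by
            have h1 : s.getLast? = some (Sum.inl e') := by
              rw [List.getLast?_eq_getLast hsne, hg]
            rw [hsm, List.getLast?_map] at h1
            cases hl2 : l.getLast? with
            | none => rw [hl2] at h1; simp at h1
            | some e'' =>
              rw [hl2] at h1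
              simp only [Option.map_some] at h1
              have h4 : Sum.inl e'' = (Sum.inl e' : E ⊕ Option V) := Option.some_inj.mp h1
              injection h4 with h5
              rw [h5]
          refine ⟨l, hlne, by simp; omega, ?_, ?_⟩
          · unfold trkP
            have hlen2 : (s ++ [Sum.inr o]).length - l.length = 1 := by simp [← hlen]
            rw [hlen2, hsm, ho]
            have hps : padSym etgt l = Sum.inr (some (etgt e')) := by
              unfold padSym; rw [hle']; rfl
            rw [hps]
            rfl
          · intro y hy hleft
            rw [List.getLast?_concat] at hy
            have hyx : y = Sum.inr o := (Option.some_inj.mp hy).symm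
            rw [hyx] at hleft
            simp at hleft
        | inr o' =>
          have hjun' : okT etgt (Sum.inr o') (Sum.inr o) := by rw [← hg]; exact hjun
          have ho : o = o' := hjun'
          have hlt : l.length < s.length := by
            rcases lt_or_eq_of_le hlle with hl | hl
            · exact hl
            · exfalso
              have hsm : s = l.map Sum.inl := by
                rw [hdec]; unfold trkP; rw [← hl]; simp
              have h2 : s.getLast? = some (Sum.inr o') := by
                rw [List.getLast?_eq_getLast hsne, hg]
              rw [hsm, List.getLast?_map] at h2
              cases hl2 : l.getLast? with
              | none => rw [hl2] at h2; simp at h2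
              | some e'' => rw [hl2] at h2; simp at h2
          have hpad : s.getLast hsne = padSym etgt l := by
            have h1 : s.getLast? = some (padSym etgt l) := by
              conv_lhs => rw [hdec]
              unfold trkP
              cases hk : s.length - l.length with
              | zero => omega
              | succ k =>
                rw [List.replicate_succ', ← List.append_assoc, List.getLast?_concat]
            rw [List.getLast?_eq_getLast hsne] at h1
            exact Option.some_inj.mp h1
          have hopad : Sum.inr o = padSym etgt l := by
            rw [← hpad, hg, ho]
          refine ⟨l, hlne, by simp; omega, ?_, ?_⟩
          · conv_lhs => rw [hdec]
            unfold trkP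
            have hlen3 : (s ++ [Sum.inr o]).length - l.length = (s.length - l.length) + 1 := by
              simp; omega
            rw [hlen3, List.replicate_succ', ← List.append_assoc, ← hopad]
          · intro y hy hleft
            rw [List.getLast?_concat] at hy
            have hyx : y = Sum.inr o := (Option.some_inj.mp hy).symm
            rw [hyx] at hleft
            simp at hleft

end Conv3

section Valid3

open List

variable {V E : Type} (etgt : E → V)

/-- Columnwise compatibility for triples. -/
def okCol : ((E ⊕ Option V) × (E ⊕ Option V) × (E ⊕ Option V)) →
    ((E ⊕ Option V) × (E ⊕ Option V) × (E ⊕ Option V)) → Prop :=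
  fun a b => okT etgt a.1 b.1 ∧ okT etgt a.2.1 b.2.1 ∧ okT etgt a.2.2 b.2.2

def colAllInl (a : (E ⊕ Option V) × (E ⊕ Option V) × (E ⊕ Option V)) : Prop :=
  a.1.isLeft = true ∧ a.2.1.isLeft = true ∧ a.2.2.isLeft = true

def colHasInl (a : (E ⊕ Option V) × (E ⊕ Option V) × (E ⊕ Option V)) : Prop :=
  a.1.isLeft = true ∨ a.2.1.isLeft = true ∨ a.2.2.isLeft = true

/-- Three-track padded convolution. -/
def conv3 (u z v : List E) : List ((E ⊕ Option V) × (E ⊕ Option V) × (E ⊕ Option V)) :=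
  (trkP etgt u (max (max u.length z.length) v.length)).zip
    ((trkP etgt z (max (max u.length z.length) v.length)).zip
      (trkP etgt v (max (max u.length z.length) v.length)))

theorem aux_map_pr1_zip3 {A B C : Type} :
    ∀ (a : List A) (b : List B) (c : List C), b.length = c.length →
      (a.zip (b.zip c)).map (fun p => (p.1, p.2.1)) = a.zip b := by
  intro a
  induction a with
  | nil => intro b c h; simp
  | cons x t ih =>
    intro b c h
    cases b with
    | nil => simp
    | cons y tb =>
      cases c with
      | nil => simp at h
      | cons w tc =>
        simp only [List.zip_cons_cons, List.map_cons]
        rw [ih tb tc (by simpa using h)]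

theorem aux_map_pr2_zip3 {A B C : Type} :
    ∀ (a : List A) (b : List B) (c : List C), b.length = c.length →
      (a.zip (b.zip c)).map (fun p => (p.1, p.2.2)) = a.zip c := by
  intro a
  induction a with
  | nil => intro b c h; simp
  | cons x t ih =>
    intro b c h
    cases b with
    | nil =>
      cases c with
      | nil => simp
      | cons w tc => simp at h
    | cons y tb =>
      cases c with
      | nil => simp at h
      | cons w tc =>
        simp only [List.zip_cons_cons, List.map_cons]
        rw [ih tb tc (by simpa using h)]

theorem aux_zip3_self {A B C : Type} :
    ∀ m : List (A × B × C),
      (m.map (fun p => p.1)).zip ((m.map (fun p => p.2.1)).zip (m.map (fun p => p.2.2))) = m := by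
  intro m
  induction m with
  | nil => rfl
  | cons x t ih => simp only [List.map_cons, List.zip_cons_cons, ih]

theorem aux_conv3_pr12 (u z v : List E) :
    (conv3 etgt u z v).map (fun p => (p.1, p.2.1)) =
      deltaPair etgt u z ++
        List.replicate ((max (max u.length z.length) v.length) - max u.length z.length)
          (padSym etgt u, padSym etgt z) := by
  unfold conv3
  rw [aux_map_pr1_zip3 _ _ _ (by
    rw [aux_length_trkP etgt (by omega), aux_length_trkP etgt (by omega)])]
  exact aux_trkP_zip etgt u z (by omega)

theorem aux_conv3_pr13 (u z v : List E) :
    (conv3 etgt u z v).map (fun p => (p.1, p.2.2)) =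
      deltaPair etgt u v ++
        List.replicate ((max (max u.length z.length) v.length) - max u.length v.length)
          (padSym etgt u, padSym etgt v) := by
  unfold conv3
  rw [aux_map_pr2_zip3 _ _ _ (by
    rw [aux_length_trkP etgt (by omega), aux_length_trkP etgt (by omega)])]
  exact aux_trkP_zip etgt u v (by omega)

theorem aux_conv3_pr23 (u z v : List E) :
    (conv3 etgt u z v).map Prod.snd =
      deltaPair etgt z v ++
        List.replicate ((max (max u.length z.length) v.length) - max z.length v.length)
          (padSym etgt z, padSym etgt v) := by
  unfold conv3
  rw [List.map_snd_zip (by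
    rw [List.length_zip, aux_length_trkP etgt (by omega), aux_length_trkP etgt (by omega),
      aux_length_trkP etgt (by omega)]
    simp)]
  exact aux_trkP_zip etgt z v (by omega)

theorem aux_length_conv3 (u z v : List E) :
    (conv3 etgt u z v).length = max (max u.length z.length) v.length := by
  unfold conv3
  rw [List.length_zip, List.length_zip, aux_length_trkP etgt (by omega),
    aux_length_trkP etgt (by omega), aux_length_trkP etgt (by omega)]
  simp

theorem aux_trkP_getElem_lt {l : List E} {m i : ℕ} (h : i < l.length)
    (him : i < (trkP etgt l m).length) : (trkP etgt l m)[i] = Sum.inl (l[i]) := by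
  unfold trkP at him ⊢
  rw [List.getElem_append_left (by simpa using h)]
  exact List.getElem_map _

theorem aux_chain'_trkP_get (l : List E) {m i : ℕ} (hl : l.length ≤ m) (hi : i + 1 < m) :
    okT etgt ((trkP etgt l m)[i]'(by rw [aux_length_trkP etgt hl]; omega))
      ((trkP etgt l m)[i+1]'(by rw [aux_length_trkP etgt hl]; omega)) := by
  have h2 := (List.chain'_iff_get.mp (aux_chain'_trkP etgt l m)) i
    (by rw [aux_length_trkP etgt hl]; omega)
  rw [List.get_eq_getElem, List.get_eq_getElem] at h2
  exact h2

theorem aux_valid3_decomp (m : List ((E ⊕ Option V) × (E ⊕ Option V) × (E ⊕ Option V)))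
    (hhead : ∃ a ∈ m.head?, colAllInl a) (hchain : m.Chain' (okCol etgt))
    (hlast : ∃ b ∈ m.getLast?, colHasInl b) :
    ∃ u z v : List E, u ≠ [] ∧ z ≠ [] ∧ v ≠ [] ∧ m = conv3 etgt u z v := by
  obtain ⟨a, ha, hall⟩ := hhead
  obtain ⟨b, hb, hor⟩ := hlast
  have hmne : m ≠ [] := by rintro rfl; simp at ha
  -- decompose the three tracks
  have htr : ∀ (f : ((E ⊕ Option V) × (E ⊕ Option V) × (E ⊕ Option V)) → (E ⊕ Option V)),
      (f a).isLeft = true → (∀ p q, okCol etgt p q → okT etgt (f p) (f q)) →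
      ∃ l : List E, l ≠ [] ∧ l.length ≤ m.length ∧ m.map f = trkP etgt l m.length ∧
        (∀ x, (m.map f).getLast? = some x → x.isLeft = true → m.length = l.length) := by
    intro f hf hok
    have h1 : ∃ e, (m.map f).head? = some (Sum.inl e) := by
      rw [List.head?_map, show m.head? = some a from ha]
      cases hfa : f a with
      | inl e => exact ⟨e, by rw [Option.map_some, hfa]⟩
      | inr o => rw [hfa] at hf; simp at hf
    have h2 : (m.map f).Chain' (okT etgt) := by
      rw [List.chain'_map]
      exact hchain.imp hok
    obtain ⟨l, h3, h4, h5, h6⟩ := aux_track_decomp etgt (m.map f) h1 h2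
    rw [List.length_map] at h4 h5
    exact ⟨l, h3, h4, h5, fun x hx hl => by simpa using h6 x hx hl⟩
  obtain ⟨l1, h1ne, h1le, h1d, h1last⟩ := htr (fun p => p.1) hall.1 (fun p q h => h.1)
  obtain ⟨l2, h2ne, h2le, h2d, h2last⟩ := htr (fun p => p.2.1) hall.2.1 (fun p q h => h.2.1)
  obtain ⟨l3, h3ne, h3le, h3d, h3last⟩ := htr (fun p => p.2.2) hall.2.2 (fun p q h => h.2.2)
  have hmax : max (max l1.length l2.length) l3.length = m.length := by
    have hone : l1.length = m.length ∨ l2.length = m.length ∨ l3.length = m.length := by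
      rcases hor with h | h | h
      · left
        exact (h1last b.1 (by rw [List.getLast?_map, hb]; rfl) h).symm
      · right; left
        exact (h2last b.2.1 (by rw [List.getLast?_map, hb]; rfl) h).symm
      · right; right
        exact (h3last b.2.2 (by rw [List.getLast?_map, hb]; rfl) h).symm
    omega
  refine ⟨l1, l2, l3, h1ne, h2ne, h3ne, ?_⟩
  unfold conv3
  rw [hmax, ← h1d, ← h2d, ← h3d]
  exact (aux_zip3_self m).symm

theorem aux_conv3_valid (u z v : List E) (hu : u ≠ []) (hz : z ≠ []) (hv : v ≠ []) :
    (∃ a ∈ (conv3 etgt u z v).head?, colAllInl a) ∧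
      (conv3 etgt u z v).Chain' (okCol etgt) ∧
      ∃ b ∈ (conv3 etgt u z v).getLast?, colHasInl b := by
  have hu0 := List.length_pos_iff.mpr hu
  have hz0 := List.length_pos_iff.mpr hz
  have hv0 := List.length_pos_iff.mpr hv
  set M3 := max (max u.length z.length) v.length with hM3
  have hlen : (conv3 etgt u z v).length = M3 := aux_length_conv3 etgt u z v
  have hM30 : 0 < M3 := by omega
  have hne : conv3 etgt u z v ≠ [] := by
    intro hc; rw [hc] at hlen; simp at hlen; omega
  have hget : ∀ (i : ℕ) (hi : i < M3),
      (conv3 etgt u z v)[i]'(by omega) =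
        ((trkP etgt u M3)[i]'(by rw [aux_length_trkP etgt (by omega)]; omega),
         (trkP etgt z M3)[i]'(by rw [aux_length_trkP etgt (by omega)]; omega),
         (trkP etgt v M3)[i]'(by rw [aux_length_trkP etgt (by omega)]; omega)) := by
    intro i hi
    unfold conv3
    simp only [List.getElem_zip]
    rfl
  refine ⟨?_, ?_, ?_⟩
  · refine ⟨(conv3 etgt u z v)[0]'(by omega), ?_, ?_⟩
    · rw [List.head?_eq_head hne, List.head_eq_getElem]
      rfl
    · rw [hget 0 hM30]
      unfold colAllInl
      rw [aux_trkP_getElem_lt etgt hu0, aux_trkP_getElem_lt etgt hz0,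
        aux_trkP_getElem_lt etgt hv0]
      exact ⟨rfl, rfl, rfl⟩
  · rw [List.chain'_iff_get]
    intro i hi
    rw [List.get_eq_getElem, List.get_eq_getElem]
    rw [hlen] at hi
    rw [hget i (by omega), hget (i + 1) (by omega)]
    exact ⟨aux_chain'_trkP_get etgt u (by omega) (by omega),
      aux_chain'_trkP_get etgt z (by omega) (by omega),
      aux_chain'_trkP_get etgt v (by omega) (by omega)⟩
  · refine ⟨(conv3 etgt u z v)[M3 - 1]'(by rw [hlen]; omega), ?_, ?_⟩
    · rw [List.getLast?_eq_getLast hne, List.getLast_eq_getElem]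
      simp only [hlen]
      exact Option.mem_some_iff.mpr rfl
    · rw [hget (M3 - 1) (by omega)]
      unfold colHasInl
      have hcase : u.length = M3 ∨ z.length = M3 ∨ v.length = M3 := by
        rw [hM3]; omega
      rcases hcase with h | h | h
      · left
        rw [aux_trkP_getElem_lt etgt (lt_of_lt_of_eq (Nat.sub_lt hM30 Nat.one_pos) h.symm)]
        rfl
      · right; left
        rw [aux_trkP_getElem_lt etgt (lt_of_lt_of_eq (Nat.sub_lt hM30 Nat.one_pos) h.symm)]
        rfl
      · right; right
        rw [aux_trkP_getElem_lt etgt (lt_of_lt_of_eq (Nat.sub_lt hM30 Nat.one_pos) h.symm)]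
        rfl

end Valid3

section Composition

open List

variable {V E : Type}

theorem aux_nd_iff {c : (E ⊕ Option V) × (E ⊕ Option V)} :
    (c.1.isLeft = true ∨ c.2.isLeft = true) ↔
      ¬ (c.1.isRight = true ∧ c.2.isRight = true) := by
  rcases c with ⟨x, y⟩
  cases x <;> cases y <;> simp

theorem aux_okT_closure (etgt : E → V) :
    ∀ x y, x ∈ (Set.range Sum.inl ∪ Set.range (fun e => Sum.inr (some (etgt e)))) →
      okT etgt x y →
      y ∈ (Set.range (Sum.inl : E → E ⊕ Option V) ∪
        Set.range (fun e => Sum.inr (some (etgt e)))) := by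
  intro x y hx hok
  cases y with
  | inl e => exact Or.inl ⟨e, rfl⟩
  | inr o =>
    cases x with
    | inl e =>
      have : o = some (etgt e) := hok
      exact Or.inr ⟨e, by rw [this]⟩
    | inr o' =>
      have ho : o = o' := hok
      rcases hx with ⟨e, he⟩ | ⟨e, he⟩
      · simp at he
      · refine Or.inr ⟨e, ?_⟩
        rw [he, ho]

theorem aux_syncRegular_comp [Finite E] (etgt : E → V)
    {R1 R2 : Set (List E × List E)}
    (hne1 : ∀ p ∈ R1, p.1 ≠ [] ∧ p.2 ≠ []) (hne2 : ∀ p ∈ R2, p.1 ≠ [] ∧ p.2 ≠ [])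
    (h1 : SyncRegular etgt R1) (h2 : SyncRegular etgt R2) :
    SyncRegular etgt {p : List E × List E | ∃ z, (p.1, z) ∈ R1 ∧ (z, p.2) ∈ R2} := by
  classical
  obtain ⟨σ1, i1, M1, hM1⟩ := h1
  obtain ⟨σ2, i2, M2, hM2⟩ := h2
  have hL1 : ∀ y, y ∈ M1.accepts ↔ ∃ p ∈ R1, y = deltaPair etgt p.1 p.2 := by
    intro y; rw [hM1]; exact Iff.rfl
  have hL2 : ∀ y, y ∈ M2.accepts ↔ ∃ p ∈ R2, y = deltaPair etgt p.1 p.2 := by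
    intro y; rw [hM2]; exact Iff.rfl
  set ddp : ((E ⊕ Option V) × (E ⊕ Option V)) → Prop :=
    fun c => c.1.isRight = true ∧ c.2.isRight = true with hddp
  set pr12 : ((E ⊕ Option V) × (E ⊕ Option V) × (E ⊕ Option V)) →
      ((E ⊕ Option V) × (E ⊕ Option V)) := fun x => (x.1, x.2.1) with hpr12
  set pr13 : ((E ⊕ Option V) × (E ⊕ Option V) × (E ⊕ Option V)) →
      ((E ⊕ Option V) × (E ⊕ Option V)) := fun x => (x.1, x.2.2) with hpr13
  set Msem : Set (List ((E ⊕ Option V) × (E ⊕ Option V) × (E ⊕ Option V))) :=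
    {m | ∃ u z v : List E, (u, z) ∈ R1 ∧ (z, v) ∈ R2 ∧ m = conv3 etgt u z v} with hMsem
  -- freeze acceptance on tracks 1,2
  have hfreeze12 : ∀ u z v : List E,
      (conv3 etgt u z v ∈ (freezeDFA M1 pr12 (fun x => ddp (pr12 x))).accepts ↔
        deltaPair etgt u z ∈ M1.accepts) := by
    intro u z v
    have hproj := aux_conv3_pr12 etgt u z v
    set j := (deltaPair etgt u z).length with hj
    have htake : ((conv3 etgt u z v).take j).map pr12 = deltaPair etgt u z := by
      rw [List.map_take, hproj, List.take_left' rfl]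
    have hdrop : ((conv3 etgt u z v).drop j).map pr12 =
        List.replicate ((max (max u.length z.length) v.length) - max u.length z.length)
          (padSym etgt u, padSym etgt z) := by
      rw [List.map_drop, hproj, List.drop_left' rfl]
    have hnd : ∀ x ∈ (conv3 etgt u z v).take j, ¬ (fun x => ddp (pr12 x)) x := by
      intro x hx
      have hmem : pr12 x ∈ deltaPair etgt u z := by
        rw [← htake]; exact List.mem_map_of_mem (f := pr12) hx
      exact aux_nd_iff.mp (aux_deltaPair_cols etgt hmem)
    have hd : ∀ x ∈ (conv3 etgt u z v).drop j, (fun x => ddp (pr12 x)) x := by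
      intro x hx
      have hmem : pr12 x ∈ List.replicate
          ((max (max u.length z.length) v.length) - max u.length z.length)
          (padSym etgt u, padSym etgt z) := by
        rw [← hdrop]; exact List.mem_map_of_mem (f := pr12) hx
      show ddp (pr12 x)
      rw [List.eq_of_mem_replicate hmem]
      exact ⟨rfl, rfl⟩
    have hsplit : conv3 etgt u z v =
        (conv3 etgt u z v).take j ++ (conv3 etgt u z v).drop j :=
      (List.take_append_drop _ _).symm
    rw [hsplit] at hnd hd ⊢
    rw [List.take_append_drop] at hnd hd
    rw [freezeDFA_eval M1 pr12 _ _ _ hnd hd, htake]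
  -- freeze acceptance on tracks 2,3
  have hfreeze23 : ∀ u z v : List E,
      (conv3 etgt u z v ∈ (freezeDFA M2 Prod.snd (fun x => ddp x.2)).accepts ↔
        deltaPair etgt z v ∈ M2.accepts) := by
    intro u z v
    have hproj := aux_conv3_pr23 etgt u z v
    set j := (deltaPair etgt z v).length with hj
    have htake : ((conv3 etgt u z v).take j).map Prod.snd = deltaPair etgt z v := by
      rw [List.map_take, hproj, List.take_left' rfl]
    have hdrop : ((conv3 etgt u z v).drop j).map Prod.snd =
        List.replicate ((max (max u.length z.length) v.length) - max z.length v.length)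
          (padSym etgt z, padSym etgt v) := by
      rw [List.map_drop, hproj, List.drop_left' rfl]
    have hnd : ∀ x ∈ (conv3 etgt u z v).take j, ¬ (fun x => ddp x.2) x := by
      intro x hx
      have hmem : x.2 ∈ deltaPair etgt z v := by
        rw [← htake]; exact List.mem_map_of_mem (f := Prod.snd) hx
      exact aux_nd_iff.mp (aux_deltaPair_cols etgt hmem)
    have hd : ∀ x ∈ (conv3 etgt u z v).drop j, (fun x => ddp x.2) x := by
      intro x hx
      have hmem : x.2 ∈ List.replicate
          ((max (max u.length z.length) v.length) - max z.length v.length)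
          (padSym etgt z, padSym etgt v) := by
        rw [← hdrop]; exact List.mem_map_of_mem (f := Prod.snd) hx
      show ddp x.2
      rw [List.eq_of_mem_replicate hmem]
      exact ⟨rfl, rfl⟩
    have hsplit : conv3 etgt u z v =
        (conv3 etgt u z v).take j ++ (conv3 etgt u z v).drop j :=
      (List.take_append_drop _ _).symm
    rw [hsplit] at hnd hd ⊢
    rw [List.take_append_drop] at hnd hd
    rw [freezeDFA_eval M2 Prod.snd _ _ _ hnd hd, htake]
  -- the finite effective alphabet
  have hΓ0fin : (Set.range (Sum.inl : E → E ⊕ Option V) ∪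
      Set.range (fun e => Sum.inr (some (etgt e)))).Finite :=
    (Set.finite_range _).union (Set.finite_range _)
  set Γ0 := Set.range (Sum.inl : E → E ⊕ Option V) ∪
      Set.range (fun e => Sum.inr (some (etgt e))) with hΓ0
  set S3 : Set ((E ⊕ Option V) × (E ⊕ Option V) × (E ⊕ Option V)) :=
    {x | x.1 ∈ Γ0 ∧ x.2.1 ∈ Γ0 ∧ x.2.2 ∈ Γ0} with hS3def
  have hS3 : S3.Finite := by
    refine Set.Finite.subset (hΓ0fin.prod (hΓ0fin.prod hΓ0fin)) ?_
    intro x hx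
    exact ⟨hx.1, hx.2.1, hx.2.2⟩
  have hQ1 : ∀ x : E ⊕ Option V, x.isLeft = true → x ∈ Γ0 := by
    intro x hx
    cases x with
    | inl e => exact Or.inl ⟨e, rfl⟩
    | inr o => simp at hx
  -- Msem is regular
  have hMeq : Msem =
      ({m | (∃ a ∈ m.head?, colAllInl a) ∧ m.Chain' (okCol etgt) ∧
          ∃ b ∈ m.getLast?, colHasInl b} ∩
        ((freezeDFA M1 pr12 (fun x => ddp (pr12 x))).accepts : Set _)) ∩
        ((freezeDFA M2 Prod.snd (fun x => ddp x.2)).accepts : Set _) := by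
    ext m
    constructor
    · rintro ⟨u, z, v, r1, r2, rfl⟩
      obtain ⟨hu, hz⟩ := hne1 _ r1
      obtain ⟨hz', hv⟩ := hne2 _ r2
      obtain ⟨hh, hc, hl⟩ := aux_conv3_valid etgt u z v hu hz hv
      refine ⟨⟨⟨hh, hc, hl⟩, ?_⟩, ?_⟩
      · exact (hfreeze12 u z v).mpr ((hL1 _).mpr ⟨(u, z), r1, rfl⟩)
      · exact (hfreeze23 u z v).mpr ((hL2 _).mpr ⟨(z, v), r2, rfl⟩)
    · rintro ⟨⟨⟨hh, hc, hl⟩, h12⟩, h23⟩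
      obtain ⟨u, z, v, hu, hz, hv, rfl⟩ := aux_valid3_decomp etgt m hh hc hl
      replace h12 := (hfreeze12 u z v).mp h12
      replace h23 := (hfreeze23 u z v).mp h23
      obtain ⟨p, hp, hpe⟩ := (hL1 _).mp h12
      obtain ⟨q, hq, hqe⟩ := (hL2 _).mp h23
      obtain ⟨hpu, hpz⟩ := aux_deltaPair_inj etgt hpe
      obtain ⟨hqz, hqv⟩ := aux_deltaPair_inj etgt hqe
      refine ⟨u, z, v, ?_, ?_, rfl⟩
      · have : (u, z) = p := Prod.ext hpu hpz
        rw [this]; exact hp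
      · have : (z, v) = q := Prod.ext hqz hqv
        rw [this]; exact hq
  have hMreg : IsRegularSet Msem := by
    rw [hMeq]
    refine aux_isRegularSet_inter (aux_isRegularSet_inter ?_ ?_) ?_
    · exact aux_isRegularSet_chain S3 hS3 colAllInl colHasInl (okCol etgt)
        (fun a ha => ⟨hQ1 _ ha.1, hQ1 _ ha.2.1, hQ1 _ ha.2.2⟩)
        (fun a b ha hab =>
          ⟨aux_okT_closure etgt _ _ ha.1 hab.1,
           aux_okT_closure etgt _ _ ha.2.1 hab.2.1,
           aux_okT_closure etgt _ _ ha.2.2 hab.2.2⟩)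
    · exact ⟨σ1 × Bool, inferInstance, freezeDFA M1 pr12 (fun x => ddp (pr12 x)), rfl⟩
    · exact ⟨σ2 × Bool, inferInstance, freezeDFA M2 Prod.snd (fun x => ddp x.2), rfl⟩
  have hP13 : IsRegularSet ((List.map pr13) '' Msem) :=
    aux_isRegularSet_image pr13 hMreg
  -- the final language equality
  have hfinal : {w | ∃ p ∈ {p : List E × List E | ∃ z, (p.1, z) ∈ R1 ∧ (z, p.2) ∈ R2},
        w = deltaPair etgt p.1 p.2} =
      {y : List ((E ⊕ Option V) × (E ⊕ Option V)) | ∃ b ∈ y.getLast?, ¬ ddp b} ∩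
        {y | ∃ d ∈ {d : List ((E ⊕ Option V) × (E ⊕ Option V)) | ∀ x ∈ d, ddp x},
          y ++ d ∈ (List.map pr13) '' Msem} := by
    ext y
    constructor
    · rintro ⟨⟨u, v⟩, ⟨z, r1, r2⟩, rfl⟩
      obtain ⟨hu, hz⟩ := hne1 _ r1
      obtain ⟨hz', hv⟩ := hne2 _ r2
      constructor
      · obtain ⟨b, hb, hor⟩ := aux_deltaPair_getLast etgt (v := v) hu
        exact ⟨b, hb, aux_nd_iff.mp hor⟩
      · refine ⟨List.replicate ((max (max u.length z.length) v.length) - max u.length v.length)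
          (padSym etgt u, padSym etgt v), ?_, ?_⟩
        · intro x hx
          show ddp x
          rw [List.eq_of_mem_replicate hx]
          exact ⟨rfl, rfl⟩
        · exact ⟨conv3 etgt u z v, ⟨u, z, v, r1, r2, rfl⟩, aux_conv3_pr13 etgt u z v⟩
    · rintro ⟨⟨b, hb, hbnd⟩, d, hd, m', ⟨u, z, v, r1, r2, rfl⟩, hmap⟩
      rw [aux_conv3_pr13 etgt u z v] at hmap
      obtain ⟨hy, -⟩ := aux_match_split ddp hmap.symm ⟨b, hb, hbnd⟩ hd
        (fun x hx => aux_nd_iff.mp (aux_deltaPair_cols etgt hx))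
        (fun x hx => by
          show ddp x
          rw [List.eq_of_mem_replicate hx]
          exact ⟨rfl, rfl⟩)
      exact ⟨(u, v), ⟨z, r1, r2⟩, hy⟩
  show IsRegularSet _
  rw [hfinal]
  exact aux_isRegularSet_inter (aux_isRegularSet_lastPred _)
    (aux_isRegularSet_rightQuot hP13 _)

end Composition

section SgpdEval

open List

theorem aux_evalPath_some {O A E : Type} (P : PreSgpd O A) (lab : E → A) {l : List E}
    (hl : l ≠ []) : ∃ x, evalPath? P lab l = some x := by
  cases l with
  | nil => exact absurd rfl hl
  | cons a t => exact ⟨_, rfl⟩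

theorem aux_evalPath_concat {O A E : Type} (P : PreSgpd O A) (lab : E → A) {l : List E}
    (hl : l ≠ []) (e : E) :
    evalPath? P lab (l ++ [e]) = (evalPath? P lab l).map (fun x => P.mul x (lab e)) := by
  cases l with
  | nil => exact absurd rfl hl
  | cons a t =>
    show evalPath? P lab (a :: (t ++ [e])) = _
    show some (List.foldl P.mul (lab a) (List.map lab (t ++ [e]))) = _
    rw [List.map_append, List.foldl_append]
    rfl

theorem aux_pathTgt_singleton {V E : Type} (etgt : E → V) (e : E) :
    pathTgt? etgt [e] = some (etgt e) := rfl

theorem aux_pathTgt_getLast {V E : Type} (etgt : E → V) {l : List E} (hl : l ≠ []) :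
    pathTgt? etgt l = some (etgt (l.getLast hl)) := by
  unfold pathTgt?
  rw [List.getLast?_eq_getLast hl]
  rfl

theorem aux_tgt_eval {O A E : Type} (S : Sgpd O A) (C : ChoiceOfReps S.toPreSgpd E) :
    ∀ l : List E, l ≠ [] → IsPathChain C.esrc C.etgt l →
      ∀ x, evalPath? S.toPreSgpd C.lab l = some x → pathTgt? C.etgt l = some (S.tgt x) := by
  intro l
  induction l using List.reverseRecOn with
  | nil => intro h; exact absurd rfl h
  | append_singleton s e ih =>
    intro hne hchain x hx
    by_cases hs : s = []
    · subst hs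
      have hx' : some (C.lab e) = some x := hx
      have hxe : x = C.lab e := (Option.some_inj.mp hx').symm
      rw [List.nil_append, aux_pathTgt_singleton, hxe, C.lab_tgt e]
    · have hchain' : IsPathChain C.esrc C.etgt s := (List.chain'_append.mp hchain).1
      obtain ⟨X, hX⟩ := aux_evalPath_some _ C.lab hs
      have hxeq : x = S.toPreSgpd.mul X (C.lab e) := by
        rw [aux_evalPath_concat _ C.lab hs e, hX] at hx
        exact (Option.some_inj.mp hx).symm
      have hIH := ih hs hchain' X hX
      have hjun : C.etgt (s.getLast hs) = C.esrc e := by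
        have h3 := (List.chain'_append.mp hchain).2.2
        exact h3 _ (List.getLast?_eq_getLast hs) e rfl
      have htgtX : S.tgt X = C.esrc e := by
        rw [aux_pathTgt_getLast C.etgt hs] at hIH
        rw [← hjun]
        exact (Option.some_inj.mp hIH).symm
      have htgt : S.tgt x = C.etgt e := by
        rw [hxeq, S.tgt_mul X (C.lab e) (by rw [C.lab_src]; exact htgtX)]
        exact C.lab_tgt e
      rw [aux_pathTgt_getLast C.etgt (show s ++ [e] ≠ [] by simp), htgt]
      congr 1
      simp [List.getLast_append]

/-- The relation of pairs `(u, v)` of representatives with `(u ρ) t = v ρ`. -/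
def Qrel {O A E : Type} (S : Sgpd O A) (C : ChoiceOfReps S.toPreSgpd E) (t : A) :
    Set (List E × List E) :=
  {p | p.1 ∈ C.K ∧ p.2 ∈ C.K ∧ pathTgt? C.etgt p.1 = some (S.src t) ∧
    (evalPath? S.toPreSgpd C.lab p.1).map (fun x => S.mul x t) =
      evalPath? S.toPreSgpd C.lab p.2}

theorem aux_Qrel_lab {O A E : Type} (S : Sgpd O A) (C : ChoiceOfReps S.toPreSgpd E) (e : E) :
    Qrel S C (C.lab e) = relEdge C e := by
  ext ⟨u, v⟩
  unfold Qrel relEdge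
  simp only [Set.mem_setOf_eq]
  constructor
  · rintro ⟨hu, hv, ht, he⟩
    refine ⟨hu, hv, ?_, ?_⟩
    · rw [ht, C.lab_src]
    · rw [aux_evalPath_concat _ C.lab (C.K_path u hu).1 e]
      exact he
  · rintro ⟨hu, hv, ht, he⟩
    refine ⟨hu, hv, ?_, ?_⟩
    · rw [ht, C.lab_src]
    · rw [aux_evalPath_concat _ C.lab (C.K_path u hu).1 e] at he
      exact he

theorem aux_Qrel_comp {O A E : Type} (S : Sgpd O A) (C : ChoiceOfReps S.toPreSgpd E)
    (s : A) (e : E) (h : S.tgt s = S.src (C.lab e)) :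
    Qrel S C (S.mul s (C.lab e)) =
      {p | ∃ z, (p.1, z) ∈ Qrel S C s ∧ (z, p.2) ∈ relEdge C e} := by
  ext ⟨u, v⟩
  constructor
  · rintro ⟨hu, hv, ht, he⟩
    obtain ⟨X, hX⟩ := aux_evalPath_some _ C.lab (C.K_path u hu).1
    have hsrc : pathTgt? C.etgt u = some (S.src s) := by
      rw [ht]
      congr 1
      exact S.src_mul s (C.lab e) h
    have htgtX : S.tgt X = S.src s := by
      have h2 := aux_tgt_eval S C u (C.K_path u hu).1 (C.K_path u hu).2 X hX
      exact (Option.some_inj.mp (hsrc.symm.trans h2)).symm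
    obtain ⟨z, hzK, hz⟩ := C.K_onto (S.mul X s)
    refine ⟨z, ⟨hu, hzK, hsrc, ?_⟩, ⟨hzK, hv, ?_, ?_⟩⟩
    · rw [hX, hz]
      rfl
    · have hzt := aux_tgt_eval S C z (C.K_path z hzK).1 (C.K_path z hzK).2 _ hz
      rw [hzt]
      congr 1
      rw [S.tgt_mul X s htgtX, ← C.lab_src]
      exact h
    · rw [aux_evalPath_concat _ C.lab (C.K_path z hzK).1 e, hz, ← he, hX]
      show some (S.mul (S.mul X s) (C.lab e)) = some (S.mul X (S.mul s (C.lab e)))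
      rw [S.mul_assoc' X s (C.lab e) htgtX h]
  · rintro ⟨z, ⟨hu, hzK, ht, he1⟩, ⟨hzK', hv, hzt, he2⟩⟩
    obtain ⟨X, hX⟩ := aux_evalPath_some _ C.lab (C.K_path u hu).1
    have htgtX : S.tgt X = S.src s := by
      have h2 := aux_tgt_eval S C u (C.K_path u hu).1 (C.K_path u hu).2 X hX
      exact (Option.some_inj.mp (ht.symm.trans h2)).symm
    refine ⟨hu, hv, ?_, ?_⟩
    · rw [ht]
      congr 1
      exact (S.src_mul s (C.lab e) h).symm
    · have hz : evalPath? S.toPreSgpd C.lab z = some (S.mul X s) := by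
        rw [← he1, hX]
        rfl
      rw [← he2, aux_evalPath_concat _ C.lab (C.K_path z hzK).1 e, hz, hX]
      show some (S.mul X (S.mul s (C.lab e))) = some (S.mul (S.mul X s) (C.lab e))
      rw [S.mul_assoc' X s (C.lab e) htgtX h]

theorem aux_Qrel_sync {O A E : Type} (S : Sgpd O A) (C : ChoiceOfReps S.toPreSgpd E)
    [Finite E] (hEdge : ∀ e : E, SyncRegular C.etgt (relEdge C e)) :
    ∀ w : List E, w ≠ [] → IsPathChain C.esrc C.etgt w →
      ∀ t, evalPath? S.toPreSgpd C.lab w = some t → SyncRegular C.etgt (Qrel S C t) := by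
  intro w
  induction w using List.reverseRecOn with
  | nil => intro h; exact absurd rfl h
  | append_singleton l e ih =>
    intro hne hchain t ht
    by_cases hl : l = []
    · subst hl
      have ht' : some (C.lab e) = some t := ht
      have hte : t = C.lab e := (Option.some_inj.mp ht').symm
      subst hte
      rw [aux_Qrel_lab S C e]
      exact hEdge e
    · obtain ⟨X, hX⟩ := aux_evalPath_some _ C.lab hl
      have hchain' : IsPathChain C.esrc C.etgt l := (List.chain'_append.mp hchain).1
      have ht' : t = S.mul X (C.lab e) := by
        rw [aux_evalPath_concat _ C.lab hl e, hX] at ht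
        exact (Option.some_inj.mp ht).symm
      have hjun : C.etgt (l.getLast hl) = C.esrc e :=
        (List.chain'_append.mp hchain).2.2 _ (List.getLast?_eq_getLast hl) e rfl
      have htgtX : S.tgt X = S.src (C.lab e) := by
        have h2 := aux_tgt_eval S C l hl hchain' X hX
        rw [aux_pathTgt_getLast C.etgt hl] at h2
        rw [C.lab_src, ← hjun]
        exact (Option.some_inj.mp h2).symm
      subst ht'
      rw [aux_Qrel_comp S C X e htgtX]
      exact aux_syncRegular_comp C.etgt
        (fun p hp => ⟨(C.K_path _ hp.1).1, (C.K_path _ hp.2.1).1⟩)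
        (fun p hp => ⟨(C.K_path _ hp.1).1, (C.K_path _ hp.2.1).1⟩)
        (ih hl hchain' X hX) (hEdge e)

end SgpdEval

section Transfer

open List

theorem aux_pathTgt_map {V E E' : Type} (etgt : E → V) (etgt' : E' → V) (φ : E → E')
    (hc : ∀ e, etgt' (φ e) = etgt e) (l : List E) :
    pathTgt? etgt' (l.map φ) = pathTgt? etgt l := by
  unfold pathTgt?
  rw [List.getLast?_map, Option.map_map]
  congr 1
  funext e
  exact hc e

theorem aux_evalPath_map {O A E E' : Type} (P : PreSgpd O A) (lab : E → A) (lab' : E' → A)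
    (φ : E → E') (hc : ∀ e, lab' (φ e) = lab e) (l : List E) :
    evalPath? P lab' (l.map φ) = evalPath? P lab l := by
  cases l with
  | nil => rfl
  | cons a t =>
    show some _ = some _
    have h1 : List.map lab' (List.map φ t) = List.map lab t := by
      rw [List.map_map]
      congr 1
      funext e
      exact hc e
    show some (List.foldl P.mul (lab' (φ a)) (List.map lab' (List.map φ t))) = _
    rw [h1, hc a]

theorem aux_deltaPair_map {V E E' : Type} (etgt : E → V) (etgt' : E' → V) (φ : E → E')
    (hc : ∀ e, etgt' (φ e) = etgt e) (u v : List E) :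
    deltaPair etgt' (u.map φ) (v.map φ) =
      (deltaPair etgt u v).map
        (Prod.map (Sum.map φ (id : Option V → Option V)) (Sum.map φ id)) := by
  have hpad : ∀ l : List E, padSym etgt' (l.map φ) =
      Sum.map φ (id : Option V → Option V) (padSym etgt l) := by
    intro l
    unfold padSym
    rw [List.getLast?_map, Option.map_map]
    have hco : etgt' ∘ φ = etgt := funext hc
    rw [hco]
    rfl
  unfold deltaPair
  rw [List.length_map, List.length_map]
  by_cases h : u.length ≤ v.length
  · rw [if_pos h, if_pos h, List.map_append]
    congr 1
    · rw [← List.zip_map]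
      congr 1 <;> (rw [List.map_map, List.map_map]; rfl)
    · rw [← List.map_drop, List.map_map, List.map_map]
      congr 1
      funext e
      show (padSym etgt' (u.map φ), Sum.inl (φ e)) = _
      rw [hpad u]
      rfl
  · rw [if_neg h, if_neg h, List.map_append]
    congr 1
    · rw [← List.zip_map]
      congr 1 <;> (rw [List.map_map, List.map_map]; rfl)
    · rw [← List.map_drop, List.map_map, List.map_map]
      congr 1
      funext e
      show (Sum.inl (φ e), padSym etgt' (v.map φ)) = _
      rw [hpad v]
      rfl

theorem aux_syncRegular_image {V E E' : Type} (etgt : E → V) (etgt' : E' → V) (φ : E → E')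
    (hc : ∀ e, etgt' (φ e) = etgt e) {R : Set (List E × List E)}
    (h : SyncRegular etgt R) :
    SyncRegular etgt' {p | ∃ q ∈ R, p = (q.1.map φ, q.2.map φ)} := by
  show IsRegularSet _
  have heq : {w | ∃ p ∈ {p | ∃ q ∈ R, p = (q.1.map φ, q.2.map φ)},
        w = deltaPair etgt' p.1 p.2} =
      (List.map (Prod.map (Sum.map φ (id : Option V → Option V)) (Sum.map φ id))) ''
        {w | ∃ p ∈ R, w = deltaPair etgt p.1 p.2} := by
    ext w
    constructor
    · rintro ⟨p, ⟨q, hq, rfl⟩, rfl⟩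
      exact ⟨deltaPair etgt q.1 q.2, ⟨q, hq, rfl⟩,
        (aux_deltaPair_map etgt etgt' φ hc q.1 q.2).symm⟩
    · rintro ⟨w', ⟨q, hq, rfl⟩, rfl⟩
      exact ⟨(q.1.map φ, q.2.map φ), ⟨q, hq, rfl⟩, (aux_deltaPair_map etgt etgt' φ hc q.1 q.2).symm⟩
  rw [heq]
  exact aux_isRegularSet_image _ h

end Transfer

section Extend

open List

variable {O A : Type} (S : Sgpd O A) {E : Type}

/-- The canonical inclusion of the edge set into the extended label alphabet. -/
def extφ (C : ChoiceOfReps S.toPreSgpd E) (T : Set A) (e : E) :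
    {a : A // a ∈ Set.range C.lab ∪ T} :=
  ⟨C.lab e, Or.inl ⟨e, rfl⟩⟩

/-- The extended choice of representatives, with injective labelling whose image
contains `T`. -/
def extendReps (C : ChoiceOfReps S.toPreSgpd E) (T : Set A) :
    ChoiceOfReps S.toPreSgpd {a : A // a ∈ Set.range C.lab ∪ T} where
  esrc a := S.src a.1
  etgt a := S.tgt a.1
  lab a := a.1
  lab_src a := rfl
  lab_tgt a := rfl
  K := (List.map (extφ S C T)) '' C.K
  K_path := by
    rintro l' ⟨l, hl, rfl⟩
    refine ⟨?_, ?_⟩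
    · intro hno
      exact (C.K_path l hl).1 (List.map_eq_nil_iff.mp hno)
    · show List.Chain' _ (l.map (extφ S C T))
      rw [List.chain'_map]
      refine ((C.K_path l hl).2).imp ?_
      intro a b hab
      show S.tgt (C.lab a) = S.src (C.lab b)
      rw [C.lab_tgt, C.lab_src]
      exact hab
  K_onto := by
    intro a
    obtain ⟨l, hl, he⟩ := C.K_onto a
    refine ⟨l.map (extφ S C T), ⟨l, hl, rfl⟩, ?_⟩
    rw [aux_evalPath_map S.toPreSgpd C.lab _ (extφ S C T) (fun e => rfl) l]
    exact he

theorem extendReps_etgt_comp (C : ChoiceOfReps S.toPreSgpd E) (T : Set A) (e : E) :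
    (extendReps S C T).etgt (extφ S C T e) = C.etgt e := C.lab_tgt e

theorem extendReps_relEdge (C : ChoiceOfReps S.toPreSgpd E) (T : Set A)
    (a : {a : A // a ∈ Set.range C.lab ∪ T}) :
    relEdge (extendReps S C T) a =
      {p | ∃ q ∈ Qrel S C a.1, p = (q.1.map (extφ S C T), q.2.map (extφ S C T))} := by
  have hev : ∀ l : List E,
      evalPath? S.toPreSgpd (extendReps S C T).lab (l.map (extφ S C T)) =
        evalPath? S.toPreSgpd C.lab l :=
    aux_evalPath_map S.toPreSgpd C.lab _ (extφ S C T) (fun e => rfl)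
  have htg : ∀ l : List E,
      pathTgt? (extendReps S C T).etgt (l.map (extφ S C T)) = pathTgt? C.etgt l :=
    aux_pathTgt_map C.etgt _ (extφ S C T) (fun e => C.lab_tgt e)
  ext ⟨u', v'⟩
  constructor
  · rintro ⟨hu', hv', ht', he'⟩
    obtain ⟨u, huK, rfl⟩ := hu'
    obtain ⟨v, hvK, rfl⟩ := hv'
    refine ⟨(u, v), ⟨huK, hvK, ?_, ?_⟩, rfl⟩
    · rw [← htg u]
      exact ht'
    · have hune : u.map (extφ S C T) ≠ [] := by
        intro hno
        exact (C.K_path u huK).1 (List.map_eq_nil_iff.mp hno)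
      rw [aux_evalPath_concat S.toPreSgpd (extendReps S C T).lab hune a,
        hev u, hev v] at he'
      exact he'
  · rintro ⟨⟨u, v⟩, ⟨huK, hvK, ht, he⟩, heq⟩
    have h1 : u' = u.map (extφ S C T) := congrArg Prod.fst heq
    have h2 : v' = v.map (extφ S C T) := congrArg Prod.snd heq
    subst h1
    subst h2
    refine ⟨⟨u, huK, rfl⟩, ⟨v, hvK, rfl⟩, ?_, ?_⟩
    · rw [htg u]
      exact ht
    · have hune : u.map (extφ S C T) ≠ [] := by
        intro hno
        exact (C.K_path u huK).1 (List.map_eq_nil_iff.mp hno)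
      rw [aux_evalPath_concat S.toPreSgpd (extendReps S C T).lab hune a, hev u, hev v]
      exact he

theorem extendReps_relVertex (C : ChoiceOfReps S.toPreSgpd E) (T : Set A) (v0 : O) :
    relVertex (extendReps S C T) v0 =
      {p | ∃ q ∈ relVertex C v0, p = (q.1.map (extφ S C T), q.2.map (extφ S C T))} := by
  have hev : ∀ l : List E,
      evalPath? S.toPreSgpd (extendReps S C T).lab (l.map (extφ S C T)) =
        evalPath? S.toPreSgpd C.lab l :=
    aux_evalPath_map S.toPreSgpd C.lab _ (extφ S C T) (fun e => rfl)
  have htg : ∀ l : List E,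
      pathTgt? (extendReps S C T).etgt (l.map (extφ S C T)) = pathTgt? C.etgt l :=
    aux_pathTgt_map C.etgt _ (extφ S C T) (fun e => C.lab_tgt e)
  ext ⟨u', v'⟩
  constructor
  · rintro ⟨hu', hv', ht', he'⟩
    obtain ⟨u, huK, rfl⟩ := hu'
    obtain ⟨v, hvK, rfl⟩ := hv'
    refine ⟨(u, v), ⟨huK, hvK, ?_, ?_⟩, rfl⟩
    · rw [← htg u]; exact ht'
    · rw [← hev u, ← hev v]; exact he'
  · rintro ⟨⟨u, v⟩, ⟨huK, hvK, ht, he⟩, heq⟩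
    have h1 : u' = u.map (extφ S C T) := congrArg Prod.fst heq
    have h2 : v' = v.map (extφ S C T) := congrArg Prod.snd heq
    subst h1
    subst h2
    refine ⟨⟨u, huK, rfl⟩, ⟨v, hvK, rfl⟩, ?_, ?_⟩
    · rw [htg u]; exact ht
    · rw [hev u, hev v]; exact he

end Extend

/-- Proposition 3.2 (prefix-closed automatic structure case). -/
theorem stmt_2 {O A : Type} (S : Sgpd O A)
    (h : ∃ (E : Type) (C : ChoiceOfReps S.toPreSgpd E),
      IsAutomaticStructure C ∧ IsPrefixClosed C)
    (T : Set A) (hT : T.Finite) :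
    ∃ (E : Type) (C : ChoiceOfReps S.toPreSgpd E),
      IsAutomaticStructure C ∧ IsPrefixClosed C ∧
      Function.Injective C.lab ∧ T ⊆ Set.range C.lab := by
  classical
  obtain ⟨E, C, hAuto, hPC⟩ := h
  obtain ⟨hfinE, hKreg, hEdge, hVertex⟩ := hAuto
  haveI : Finite E := hfinE
  refine ⟨{a : A // a ∈ Set.range C.lab ∪ T}, extendReps S C T, ⟨?_, ?_, ?_, ?_⟩, ?_, ?_, ?_⟩
  · have hfin : (Set.range C.lab ∪ T).Finite := (Set.finite_range C.lab).union hT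
    exact hfin.to_subtype
  · show IsRegularSet ((List.map (extφ S C T)) '' C.K)
    exact aux_isRegularSet_image _ hKreg
  · intro a
    obtain ⟨w, hwK, hwe⟩ := C.K_onto a.1
    have hQ := aux_Qrel_sync S C hEdge w (C.K_path w hwK).1 (C.K_path w hwK).2 a.1 hwe
    rw [extendReps_relEdge S C T a]
    exact aux_syncRegular_image C.etgt (extendReps S C T).etgt (extφ S C T)
      (fun e => C.lab_tgt e) hQ
  · intro v0
    rw [extendReps_relVertex S C T v0]
    exact aux_syncRegular_image C.etgt (extendReps S C T).etgt (extφ S C T)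
      (fun e => C.lab_tgt e) (hVertex v0)
  · rintro l' ⟨l, hlK, rfl⟩ p hpne hpre
    have hpe : p = (l.take p.length).map (extφ S C T) := by
      rw [List.prefix_iff_eq_take] at hpre
      conv_lhs => rw [hpre]
      exact (List.map_take).symm
    have htne : l.take p.length ≠ [] := by
      intro hno
      apply hpne
      rw [hpe, hno]
      rfl
    exact ⟨l.take p.length, hPC l hlK _ htne (List.take_prefix _ _), hpe.symm⟩
  · intro a b hab
    exact Subtype.ext hab
  · intro a ha
    exact ⟨⟨a, Or.inr ha⟩, rfl⟩

end AutoRees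
end
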